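/- arXiv:1001.0562 — 10 statements merged into one kernel-verified Lean document; each statement's English description precedes it below -/
import Mathlib

section
/- Let t = ln r and define X(t) = -r u'(r)/u(r), Y(t) = -r v'(r)/v(r), Z(t) = -ε₁ r^{1+a} u^s v^δ u'(r)/|u'(r)|^p, W(t) = -ε₂ r^{1+b} u^μ v^m v'(r)/|v'(r)|^q for a radial solution (u,v) of the system -Δ_p u = ε₁ |x|^a u^s v^δ, -Δ_q v = ε₂ |x|^b u^μ v^m with u, v > 0 and u', v' ≠ 0. Then (X,Y,Z,W) satisfies the autonomous quadratic system X_t = X[X - (N-p)/(p-1) + Z/(p-1)], Y_t = Y[Y - (N-q)/(q-1) + W/(q-1)], Z_t = Z[N + a - sX - δY - Z], W_t = W[N + b - μX - mY - W]. -/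
open Real

/-!
Put `r = exp t`. Up to constant factors, `X` and `Z` are products of real powers of `exp t`,
`u (exp t)`, `v (exp t)` and odd powers of `u' (exp t)`, so the `t`-derivative of each is
itself times a combination of the corresponding logarithmic derivatives. These are
`1`, `-X`, `-Y`, and `(1 - N + Z) / (p - 1)` for `u' (exp t)`: the flux
`φ = r^(N-1) |u'|^(p-2) u'` has logarithmic derivative `Z` in `t` by the equation, and
`u' = (r^(1-N) φ)^(1/(p-1))` as odd powers, which also shows that `u'` is differentiable.
-/

/-- The odd extension `sign x * |x| ^ α` of `x ↦ x ^ α`. -/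
noncomputable def signedRpow (α x : ℝ) : ℝ := |x| ^ (α - 1) * x

lemma signedRpow_one (x : ℝ) : signedRpow 1 x = x := by simp [signedRpow]

lemma abs_signedRpow {x : ℝ} (hx : x ≠ 0) (α : ℝ) : |signedRpow α x| = |x| ^ α := by
  rw [signedRpow, abs_mul, abs_of_nonneg (rpow_nonneg (abs_nonneg x) _),
    ← rpow_add_one (abs_ne_zero.2 hx), sub_add_cancel]

lemma signedRpow_signedRpow (α β x : ℝ) :
    signedRpow β (signedRpow α x) = signedRpow (α * β) x := by
  rcases eq_or_ne x 0 with rfl | hx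
  · simp [signedRpow]
  rw [signedRpow, abs_signedRpow hx, signedRpow, signedRpow, ← rpow_mul (abs_nonneg x),
    ← mul_assoc, ← rpow_add (abs_pos.2 hx)]
  ring_nf

lemma signedRpow_neg {x : ℝ} (hx : x ≠ 0) (α : ℝ) : signedRpow (-α) x = (signedRpow α x)⁻¹ := by
  have hx' : 0 < |x| := abs_pos.2 hx
  refine eq_inv_of_mul_eq_one_left ?_
  calc signedRpow (-α) x * signedRpow α x = |x| ^ (-α - 1) * |x| ^ (α - 1) * (|x| * |x|) := by
        rw [signedRpow, signedRpow, abs_mul_abs_self]; ring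
    _ = |x| ^ (-α - 1 + (α - 1) + 1 + 1) := by
        rw [rpow_add hx', rpow_add hx', rpow_add hx', rpow_one]; ring
    _ = 1 := by ring_nf; exact rpow_zero _

lemma div_abs_rpow_eq_signedRpow (x p : ℝ) : x / |x| ^ p = signedRpow (1 - p) x := by
  rw [signedRpow, sub_sub_cancel_left, rpow_neg (abs_nonneg x), div_eq_inv_mul]

/-- `L` is the logarithmic derivative of `f` at `x`, stated without dividing by `f x`. -/
def HasLogDerivAt (f : ℝ → ℝ) (L x : ℝ) : Prop := HasDerivAt f (f x * L) x

namespace HasLogDerivAt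

variable {f g : ℝ → ℝ} {L M x : ℝ}

theorem mul (hf : HasLogDerivAt f L x) (hg : HasLogDerivAt g M x) :
    HasLogDerivAt (fun y => f y * g y) (L + M) x :=
  HasDerivAt.congr_deriv (HasDerivAt.mul hf hg) (by ring)

theorem const_mul (c : ℝ) (hf : HasLogDerivAt f L x) :
    HasLogDerivAt (fun y => c * f y) L x :=
  HasDerivAt.congr_deriv (HasDerivAt.const_mul c hf) (by ring)

theorem neg (hf : HasLogDerivAt f L x) : HasLogDerivAt (fun y => -f y) L x :=
  HasDerivAt.congr_deriv (HasDerivAt.neg hf) (by ring)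

theorem div (hf : HasLogDerivAt f L x) (hg : HasLogDerivAt g M x) (hx : g x ≠ 0) :
    HasLogDerivAt (fun y => f y / g y) (L - M) x :=
  HasDerivAt.congr_deriv (HasDerivAt.div hf hg hx) (by field_simp)

theorem abs (hf : HasLogDerivAt f L x) (hx : f x ≠ 0) :
    HasLogDerivAt (fun y => |f y|) L x := by
  refine HasDerivAt.congr_deriv ((hasDerivAt_abs hx).comp x hf) ?_
  rw [← mul_assoc, sign_mul_self]

theorem rpow_const (hf : HasLogDerivAt f L x) (hx : f x ≠ 0) (c : ℝ) :
    HasLogDerivAt (fun y => f y ^ c) (c * L) x := by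
  refine HasDerivAt.congr_deriv (HasDerivAt.rpow_const hf (Or.inl hx)) ?_
  rw [rpow_sub_one hx]; field_simp

theorem signedRpow (hf : HasLogDerivAt f L x) (hx : f x ≠ 0) (α : ℝ) :
    HasLogDerivAt (fun y => signedRpow α (f y)) (α * L) x := by
  have h := ((hf.abs hx).rpow_const (abs_ne_zero.2 hx) (α - 1)).mul hf
  rwa [show (α - 1) * L + L = α * L by ring] at h

end HasLogDerivAt

theorem hasLogDerivAt_exp (t : ℝ) : HasLogDerivAt exp 1 t :=
  (hasDerivAt_exp t).congr_deriv (mul_one _).symm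

theorem hasLogDerivAt_exp_rpow (c t : ℝ) : HasLogDerivAt (fun τ => exp τ ^ c) c t := by
  simpa using (hasLogDerivAt_exp t).rpow_const (exp_ne_zero t) c

theorem hasLogDerivAt_comp_exp {f : ℝ → ℝ} {f' t : ℝ}
    (hf : HasDerivAt f f' (exp t)) (h0 : f (exp t) ≠ 0) :
    HasLogDerivAt (fun τ => f (exp τ)) (exp t * f' / f (exp t)) t := by
  refine (hf.comp t (hasDerivAt_exp t)).congr_deriv ?_
  field_simp

theorem hasLogDerivAt_of_flux {N p a ε z t : ℝ} {P G : ℝ → ℝ} (hp : p ≠ 1) (hP : P t ≠ 0)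
    (hflux : HasDerivAt (fun τ => exp τ ^ (N - 1) * signedRpow (p - 1) (P τ))
      (-ε * exp t ^ (N + a) * G t) t)
    (hz : z = -ε * exp t ^ (1 + a) * G t * signedRpow (1 - p) (P t)) :
    HasLogDerivAt P ((1 - N + z) / (p - 1)) t := by
  set Φ := fun τ => exp τ ^ (N - 1) * signedRpow (p - 1) (P τ) with hΦ_def
  have hS : signedRpow (p - 1) (P t) ≠ 0 :=
    mul_ne_zero (rpow_pos_of_pos (abs_pos.2 hP) _).ne' hP
  have hΦ : HasLogDerivAt Φ z t := by
    refine hflux.congr_deriv ?_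
    have he : exp t ^ (N + a) = exp t ^ (N - 1) * exp t ^ (1 + a) := by
      rw [← rpow_add (exp_pos t)]; ring_nf
    rw [hz, ← neg_sub, signedRpow_neg hP, he, hΦ_def]
    field_simp
  have hψ : HasLogDerivAt (fun τ => exp τ ^ (1 - N) * Φ τ) (1 - N + z) t :=
    (hasLogDerivAt_exp_rpow _ t).mul hΦ
  have hP_eq : P = fun τ => signedRpow (p - 1)⁻¹ (exp τ ^ (1 - N) * Φ τ) := by
    funext τ
    rw [hΦ_def, ← mul_assoc, ← rpow_add (exp_pos τ), show 1 - N + (N - 1) = 0 by ring,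
      rpow_zero, one_mul, signedRpow_signedRpow, mul_inv_cancel₀ (sub_ne_zero.2 hp),
      signedRpow_one]
  rw [hP_eq, div_eq_inv_mul]
  exact hψ.signedRpow (mul_ne_zero (rpow_pos_of_pos (exp_pos t) _).ne'
    (mul_ne_zero (rpow_pos_of_pos (exp_pos t) _).ne' hS)) _

theorem hasLogDerivAt_of_radial_pLaplacian {N p a ε Lg t : ℝ} {u u' g X Z : ℝ → ℝ}
    (hp : p ≠ 1)
    (hu : HasDerivAt u (u' (exp t)) (exp t)) (hu0 : u (exp t) ≠ 0) (hu'0 : u' (exp t) ≠ 0)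
    (hpde : HasDerivAt (fun ρ => ρ ^ (N - 1) * |u' ρ| ^ (p - 2) * u' ρ)
      (-ε * exp t ^ (N - 1 + a) * g (exp t)) (exp t))
    (hg : HasLogDerivAt (fun τ => g (exp τ)) Lg t)
    (hX : ∀ τ, X τ = -(exp τ * u' (exp τ)) / u (exp τ))
    (hZ : ∀ τ, Z τ = -ε * exp τ ^ (1 + a) * g (exp τ) * u' (exp τ) / |u' (exp τ)| ^ p) :
    HasLogDerivAt X (X t - (N - p) / (p - 1) + Z t / (p - 1)) t ∧
      HasLogDerivAt Z (N + a + Lg - Z t) t := by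
  have hZ' : ∀ τ, Z τ = -ε * exp τ ^ (1 + a) * g (exp τ) * signedRpow (1 - p) (u' (exp τ)) :=
    fun τ => by rw [hZ, mul_div_assoc, div_abs_rpow_eq_signedRpow]
  have hflux : HasDerivAt (fun τ => exp τ ^ (N - 1) * signedRpow (p - 1) (u' (exp τ)))
      (-ε * exp t ^ (N + a) * g (exp t)) t := by
    have hfun : (fun ρ => ρ ^ (N - 1) * |u' ρ| ^ (p - 2) * u' ρ)
        = fun ρ => ρ ^ (N - 1) * signedRpow (p - 1) (u' ρ) := by
      funext ρ; rw [signedRpow, mul_assoc, sub_sub, one_add_one_eq_two]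
    rw [hfun] at hpde
    refine (hpde.comp t (hasDerivAt_exp t)).congr_deriv ?_
    have he : exp t ^ (N - 1 + a) * exp t = exp t ^ (N + a) := by
      rw [← rpow_add_one (exp_ne_zero t)]; ring_nf
    rw [← he]; ring
  have hP := hasLogDerivAt_of_flux (P := fun τ => u' (exp τ)) (G := fun τ => g (exp τ))
    hp hu'0 hflux (hZ' t)
  have hU := hasLogDerivAt_comp_exp hu hu0
  constructor
  · have h := (((hasLogDerivAt_exp t).mul hP).neg).div hU hu0
    have hL : X t - (N - p) / (p - 1) + Z t / (p - 1)
        = 1 + (1 - N + Z t) / (p - 1) - exp t * u' (exp t) / u (exp t) := by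
      rw [hX]; field_simp; ring
    rwa [← hL, ← show X = _ from funext hX] at h
  · have h := (((hasLogDerivAt_exp_rpow (1 + a) t).const_mul (-ε)).mul hg).mul
      (hP.signedRpow hu'0 (1 - p))
    have hL : N + a + Lg - Z t = 1 + a + Lg + (1 - p) * ((1 - N + Z t) / (p - 1)) := by
      field_simp; ring
    rwa [← hL, ← show Z = _ from funext hZ'] at h

theorem quadratic_system_reduction_general
    (N p q a b s m δ μ ε₁ ε₂ : ℝ)
    (hp : p ≠ 1) (hq : q ≠ 1)
    (u v u' v' : ℝ → ℝ) (R₁ R₂ : ℝ)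
    (hu : ∀ r ∈ Set.Ioo R₁ R₂, HasDerivAt u (u' r) r)
    (hv : ∀ r ∈ Set.Ioo R₁ R₂, HasDerivAt v (v' r) r)
    (hupos : ∀ r ∈ Set.Ioo R₁ R₂, 0 < u r)
    (hvpos : ∀ r ∈ Set.Ioo R₁ R₂, 0 < v r)
    (hu' : ∀ r ∈ Set.Ioo R₁ R₂, u' r ≠ 0)
    (hv' : ∀ r ∈ Set.Ioo R₁ R₂, v' r ≠ 0)
    (hpde1 : ∀ r ∈ Set.Ioo R₁ R₂,
      HasDerivAt (fun ρ => ρ ^ (N - 1) * |u' ρ| ^ (p - 2) * u' ρ)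
        (-ε₁ * r ^ (N - 1 + a) * u r ^ s * v r ^ δ) r)
    (hpde2 : ∀ r ∈ Set.Ioo R₁ R₂,
      HasDerivAt (fun ρ => ρ ^ (N - 1) * |v' ρ| ^ (q - 2) * v' ρ)
        (-ε₂ * r ^ (N - 1 + b) * u r ^ μ * v r ^ m) r)
    (X Y Z W : ℝ → ℝ)
    (hX : ∀ t, X t = -(exp t * u' (exp t)) / u (exp t))
    (hY : ∀ t, Y t = -(exp t * v' (exp t)) / v (exp t))
    (hZ : ∀ t, Z t = -ε₁ * (exp t) ^ (1 + a) * u (exp t) ^ s * v (exp t) ^ δ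
        * u' (exp t) / |u' (exp t)| ^ p)
    (hW : ∀ t, W t = -ε₂ * (exp t) ^ (1 + b) * u (exp t) ^ μ * v (exp t) ^ m
        * v' (exp t) / |v' (exp t)| ^ q) :
    ∀ t : ℝ, exp t ∈ Set.Ioo R₁ R₂ →
      HasDerivAt X (X t * (X t - (N - p) / (p - 1) + Z t / (p - 1))) t ∧
      HasDerivAt Y (Y t * (Y t - (N - q) / (q - 1) + W t / (q - 1))) t ∧
      HasDerivAt Z (Z t * (N + a - s * X t - δ * Y t - Z t)) t ∧
      HasDerivAt W (W t * (N + b - μ * X t - m * Y t - W t)) t := by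
  intro t ht
  have hu0 := (hupos _ ht).ne'
  have hv0 := (hvpos _ ht).ne'
  have hU := hasLogDerivAt_comp_exp (hu _ ht) hu0
  have hV := hasLogDerivAt_comp_exp (hv _ ht) hv0
  obtain ⟨hXt, hZt⟩ := hasLogDerivAt_of_radial_pLaplacian (g := fun r => u r ^ s * v r ^ δ)
    (Z := Z) hp (hu _ ht) hu0 (hu' _ ht) (by simpa only [mul_assoc] using hpde1 _ ht)
    ((hU.rpow_const hu0 s).mul (hV.rpow_const hv0 δ)) hX (fun τ => by rw [hZ]; ring)
  obtain ⟨hYt, hWt⟩ := hasLogDerivAt_of_radial_pLaplacian (g := fun r => u r ^ μ * v r ^ m)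
    (Z := W) hq (hv _ ht) hv0 (hv' _ ht) (by simpa only [mul_assoc] using hpde2 _ ht)
    ((hU.rpow_const hu0 μ).mul (hV.rpow_const hv0 m)) hY (fun τ => by rw [hW]; ring)
  refine ⟨hXt, hYt, ?_, ?_⟩
  · exact HasDerivAt.congr_deriv hZt (by rw [hX, hY]; ring)
  · exact HasDerivAt.congr_deriv hWt (by rw [hX, hY]; ring)

/-- the substitution X = -ru'/u, Y = -rv'/v,
Z = -ε₁ r^{1+a} u^s v^δ u'/|u'|^p, W = -ε₂ r^{1+b} u^μ v^m v'/|v'|^q,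
with t = ln r, transforms radial solutions of the Emden–Fowler system (G)
into solutions of the quadratic Kolmogorov-type autonomous system (M). -/
theorem quadratic_system_reduction
    (N p q a b s m δ μ ε₁ ε₂ : ℝ)
    (hp : p ≠ 1) (hq : q ≠ 1)
    (hε₁ : ε₁ = 1 ∨ ε₁ = -1) (hε₂ : ε₂ = 1 ∨ ε₂ = -1)
    (u v u' v' : ℝ → ℝ) (R₁ R₂ : ℝ) (hR : 0 < R₁)
    (hu : ∀ r ∈ Set.Ioo R₁ R₂, HasDerivAt u (u' r) r)
    (hv : ∀ r ∈ Set.Ioo R₁ R₂, HasDerivAt v (v' r) r)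
    (hupos : ∀ r ∈ Set.Ioo R₁ R₂, 0 < u r)
    (hvpos : ∀ r ∈ Set.Ioo R₁ R₂, 0 < v r)
    (hu' : ∀ r ∈ Set.Ioo R₁ R₂, u' r ≠ 0)
    (hv' : ∀ r ∈ Set.Ioo R₁ R₂, v' r ≠ 0)
    (hpde1 : ∀ r ∈ Set.Ioo R₁ R₂,
      HasDerivAt (fun ρ => ρ ^ (N - 1) * |u' ρ| ^ (p - 2) * u' ρ)
        (-ε₁ * r ^ (N - 1 + a) * u r ^ s * v r ^ δ) r)
    (hpde2 : ∀ r ∈ Set.Ioo R₁ R₂,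
      HasDerivAt (fun ρ => ρ ^ (N - 1) * |v' ρ| ^ (q - 2) * v' ρ)
        (-ε₂ * r ^ (N - 1 + b) * u r ^ μ * v r ^ m) r)
    (X Y Z W : ℝ → ℝ)
    (hX : ∀ t, X t = -(exp t * u' (exp t)) / u (exp t))
    (hY : ∀ t, Y t = -(exp t * v' (exp t)) / v (exp t))
    (hZ : ∀ t, Z t = -ε₁ * (exp t) ^ (1 + a) * u (exp t) ^ s * v (exp t) ^ δ
        * u' (exp t) / |u' (exp t)| ^ p)
    (hW : ∀ t, W t = -ε₂ * (exp t) ^ (1 + b) * u (exp t) ^ μ * v (exp t) ^ m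
        * v' (exp t) / |v' (exp t)| ^ q) :
    ∀ t : ℝ, exp t ∈ Set.Ioo R₁ R₂ →
      HasDerivAt X (X t * (X t - (N - p) / (p - 1) + Z t / (p - 1))) t ∧
      HasDerivAt Y (Y t * (Y t - (N - q) / (q - 1) + W t / (q - 1))) t ∧
      HasDerivAt Z (Z t * (N + a - s * X t - δ * Y t - Z t)) t ∧
      HasDerivAt W (W t * (N + b - μ * X t - m * Y t - W t)) t :=
  quadratic_system_reduction_general N p q a b s m δ μ ε₁ ε₂ hp hq u v u' v' R₁ R₂ hu hv hupos hvpos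
    hu' hv' hpde1 hpde2 X Y Z W hX hY hZ hW
end

section
/- The characteristic polynomial of the linearization at M₀ of the quadratic system, namely f(λ) = [(λ - X₀)(λ + Z₀) + (s/(p-1))X₀Z₀][(λ - Y₀)(λ + W₀) + (m/(q-1))Y₀W₀] - (δμ/((p-1)(q-1)))X₀Y₀Z₀W₀, has constant term -H with H = (D/((p-1)(q-1)))X₀Y₀Z₀W₀. Consequently, if X₀, Y₀, Z₀, W₀ > 0 and D = δμ - (p-1-s)(q-1-m) > 0, then f has at least one real root λ₃ < 0 and one real root λ₄ > 0. -/
/-!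
At `λ = 0` the two quadratic factors equal `-((p-1-s)/(p-1)) X₀Z₀` and `-((q-1-m)/(q-1)) Y₀W₀`,
so `f 0 = -(D/((p-1)(q-1))) X₀Y₀Z₀W₀`, which is negative under the positivity assumptions.
As a product of two monic quadratics minus a constant, `f` tends to `+∞` at both ends, and the
intermediate value theorem on each half-line gives the two roots.
-/

open Filter

theorem exists_lt_root_and_gt_root_of_neg {α δ : Type*} [ConditionallyCompleteLinearOrder α]
    [TopologicalSpace α] [OrderTopology α] [DenselyOrdered α] [LinearOrder δ] [Zero δ]
    [TopologicalSpace δ] [OrderClosedTopology δ] {f : α → δ} {x₀ : α} (hf : Continuous f)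
    (hx₀ : f x₀ < 0) (hbot : Tendsto f atBot atTop) (htop : Tendsto f atTop atTop) :
    ∃ l₃ l₄ : α, l₃ < x₀ ∧ x₀ < l₄ ∧ f l₃ = 0 ∧ f l₄ = 0 := by
  obtain ⟨l₃, hl₃, hfl₃⟩ := intermediate_value_Iio' hf.continuousOn hbot hx₀
  obtain ⟨l₄, hl₄, hfl₄⟩ := intermediate_value_Ioi hf.continuousOn htop hx₀
  exact ⟨l₃, l₄, hl₃, hl₄, hfl₃, hfl₄⟩

theorem tendsto_sub_mul_add_add_const_atTop (a b c : ℝ) :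
    Tendsto (fun l : ℝ => (l - a) * (l + b) + c) atTop atTop :=
  tendsto_atTop_add_const_right _ _ <|
    (tendsto_atTop_add_const_right _ _ tendsto_id).atTop_mul_atTop₀
      (tendsto_atTop_add_const_right _ _ tendsto_id)

theorem tendsto_sub_mul_add_add_const_atBot (a b c : ℝ) :
    Tendsto (fun l : ℝ => (l - a) * (l + b) + c) atBot atTop :=
  tendsto_atTop_add_const_right _ _ <|
    (tendsto_atBot_add_const_right _ _ tendsto_id).atBot_mul_atBot₀
      (tendsto_atBot_add_const_right _ _ tendsto_id)

theorem char_poly_real_roots_general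
    (p q s m δ μ X₀ Y₀ Z₀ W₀ D : ℝ)
    (hp : 1 < p) (hq : 1 < q)
    (hDdef : D = δ * μ - (p - 1 - s) * (q - 1 - m))
    (f : ℝ → ℝ)
    (hf : ∀ l : ℝ, f l =
      ((l - X₀) * (l + Z₀) + (s / (p - 1)) * X₀ * Z₀) *
        ((l - Y₀) * (l + W₀) + (m / (q - 1)) * Y₀ * W₀) -
      (δ * μ / ((p - 1) * (q - 1))) * X₀ * Y₀ * Z₀ * W₀) :
    f 0 = -((D / ((p - 1) * (q - 1))) * X₀ * Y₀ * Z₀ * W₀) ∧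
    (0 < X₀ → 0 < Y₀ → 0 < Z₀ → 0 < W₀ → 0 < D →
      ∃ l₃ l₄ : ℝ, l₃ < 0 ∧ 0 < l₄ ∧ f l₃ = 0 ∧ f l₄ = 0) := by
  have hp₁ : 0 < p - 1 := sub_pos.mpr hp
  have hq₁ : 0 < q - 1 := sub_pos.mpr hq
  have hf₀ : f 0 = -((D / ((p - 1) * (q - 1))) * X₀ * Y₀ * Z₀ * W₀) := by
    rw [hf, hDdef]
    field_simp
    ring
  refine ⟨hf₀, fun hX₀ hY₀ hZ₀ hW₀ hD => ?_⟩
  have hf₀_neg : f 0 < 0 := by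
    rw [hf₀, neg_lt_zero]
    positivity
  obtain rfl : f = _ := funext hf
  refine exists_lt_root_and_gt_root_of_neg (by fun_prop) hf₀_neg ?_ ?_
  · exact tendsto_atTop_add_const_right _ _ <|
      (tendsto_sub_mul_add_add_const_atBot X₀ Z₀ _).atTop_mul_atTop₀
        (tendsto_sub_mul_add_add_const_atBot Y₀ W₀ _)
  · exact tendsto_atTop_add_const_right _ _ <|
      (tendsto_sub_mul_add_add_const_atTop X₀ Z₀ _).atTop_mul_atTop₀
        (tendsto_sub_mul_add_add_const_atTop Y₀ W₀ _)

/-- the characteristic polynomial f of the linearization of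
system (M) at M₀ has constant term -H with H = (D/((p-1)(q-1)))X₀Y₀Z₀W₀;
hence when X₀,Y₀,Z₀,W₀ > 0 and D > 0, f has a negative real root and a
positive real root. -/
theorem char_poly_real_roots
    (N p q a b s m δ μ γ ξ X₀ Y₀ Z₀ W₀ D : ℝ)
    (hp : 1 < p) (hq : 1 < q)
    (hDdef : D = δ * μ - (p - 1 - s) * (q - 1 - m))
    (hγ : (p - 1 - s) * γ + p + a = δ * ξ)
    (hξ : (q - 1 - m) * ξ + q + b = μ * γ)
    (hX₀ : X₀ = γ) (hY₀ : Y₀ = ξ)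
    (hZ₀ : Z₀ = N - p - (p - 1) * γ) (hW₀ : W₀ = N - q - (q - 1) * ξ)
    (f : ℝ → ℝ)
    (hf : ∀ l : ℝ, f l =
      ((l - X₀) * (l + Z₀) + (s / (p - 1)) * X₀ * Z₀) *
        ((l - Y₀) * (l + W₀) + (m / (q - 1)) * Y₀ * W₀) -
      (δ * μ / ((p - 1) * (q - 1))) * X₀ * Y₀ * Z₀ * W₀) :
    f 0 = -((D / ((p - 1) * (q - 1))) * X₀ * Y₀ * Z₀ * W₀) ∧
    (0 < X₀ → 0 < Y₀ → 0 < Z₀ → 0 < W₀ → 0 < D →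
      ∃ l₃ l₄ : ℝ, l₃ < 0 ∧ 0 < l₄ ∧ f l₃ = 0 ∧ f l₄ = 0) :=
  char_poly_real_roots_general p q s m δ μ X₀ Y₀ Z₀ W₀ D hp hq hDdef f hf
end

section
/- For the critical exponent Q = Q₂ = (N(p-1) + p + pa)/(N-p), the line X/p' + Z/(Q₂+1) - (N-p)/p = 0 (where p' = p/(p-1)) is invariant under the flow of the system X_t = X[X - (N-p)/(p-1) + Z/(p-1)], Z_t = Z[N+a - Q₂X - Z]; i.e., if L(X,Z) = X/p' + Z/(Q₂+1) - (N-p)/p, then the derivative of L along the vector field vanishes whenever L(X,Z) = 0. -/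
/-!
Writing `L = X/p' + Z/(Q+1) - (N-p)/p`, the derivative of `L` along the vector field factors as
`(X - Z) · L` as soon as `(Q + 1)(N - p) = p(N + a)`, which is the defining relation of `Q₂`.
-/

section InvariantLine

variable {N p a Q : ℝ}

theorem critical_exponent_add_one_mul (hpN : N - p ≠ 0)
    (hQ : Q = (N * (p - 1) + p + p * a) / (N - p)) :
    (Q + 1) * (N - p) = p * (N + a) := by
  rw [hQ]
  field_simp
  ring

theorem derivative_along_flow_eq_mul_line (hp0 : p ≠ 0) (hp1 : p - 1 ≠ 0) (hQ : Q + 1 ≠ 0)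
    (hcrit : (Q + 1) * (N - p) = p * (N + a)) (X Z : ℝ) :
    (X * (X - (N - p) / (p - 1) + Z / (p - 1))) / (p / (p - 1))
        + (Z * (N + a - Q * X - Z)) / (Q + 1)
      = (X - Z) * (X / (p / (p - 1)) + Z / (Q + 1) - (N - p) / p) := by
  have hNa : N + a = (Q + 1) * (N - p) / p := by
    rw [hcrit]
    field_simp
  rw [hNa]
  field_simp
  ring

end InvariantLine

/-- in the critical case Q = Q₂ = (N(p-1)+p+pa)/(N-p), the line
L(X,Z) = X/p' + Z/(Q₂+1) - (N-p)/p = 0 is invariant under the flow of the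
scalar system: the derivative of L along the vector field vanishes on the
line. -/
theorem critical_invariant_line
    (N p a Q₂ : ℝ)
    (hp : 1 < p) (hpN : p < N) (hpa : 0 < p + a)
    (hQ₂ : Q₂ = (N * (p - 1) + p + p * a) / (N - p)) :
    ∀ X Z : ℝ,
      X / (p / (p - 1)) + Z / (Q₂ + 1) - (N - p) / p = 0 →
      (X * (X - (N - p) / (p - 1) + Z / (p - 1))) / (p / (p - 1))
        + (Z * (N + a - Q₂ * X - Z)) / (Q₂ + 1) = 0 := by
  intro X Z hline
  have hNp : N - p ≠ 0 := by linarith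
  have hcrit := critical_exponent_add_one_mul hNp hQ₂
  have hQ₂_ne : Q₂ + 1 ≠ 0 := by
    intro h
    rw [h, zero_mul] at hcrit
    exact (mul_pos (by linarith) (by linarith : 0 < N + a)).ne hcrit
  rw [derivative_along_flow_eq_mul_line (by positivity) (by linarith) hQ₂_ne hcrit, hline,
    mul_zero]
end

section
/- Let (X,Y,Z,W) be a solution of the quadratic system in the open region X,Y,Z,W > 0, defined on all of ℝ. Then the trajectory remains in the box (0,(N-p)/(p-1)) × (0,(N-q)/(q-1)) × (0,N+a) × (0,N+b) for all t ∈ ℝ. (Key steps: if X(t₀) = (N-p)/(p-1) at some t₀, then X satisfies X_t ≥ X[X - (N-p)/(p-1)] afterwards and blows up in finite time, contradicting global existence; analogously if Z(t₀) = N+a then for t < t₀, Z > N+a and Z_t ≤ Z(N+a-Z), forcing backward blow-up.) -/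
/-!
For `f > 0` with `f' = f (f - K + g)`, `g > 0`, `K > 0`, the function
`h t = (K / f t - 1) e^{-K t}` has derivative `-K (g / f) e^{-K t} < 0`.
If `f t₀ ≥ K`, then `h` is negative and decreasing after `t₀`, so `K / f - 1 = h e^{K t}`
drops below `-1` in finite time, i.e. `f` blows up, which a global positive solution cannot do.
For `Z` and `W` the same argument runs backwards in time.
-/

open Filter Topology Real

theorem lt_of_hasDerivAt_mul_sub_add {K : ℝ} (hK : 0 < K) {f g : ℝ → ℝ}
    (hf : ∀ t, 0 < f t) (hg : ∀ t, 0 < g t)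
    (hd : ∀ t, HasDerivAt f (f t * (f t - K + g t)) t) (t₀ : ℝ) : f t₀ < K := by
  by_contra! hKf
  set h : ℝ → ℝ := fun t => (K / f t - 1) * exp (-K * t) with h_def
  have h_deriv : ∀ t, HasDerivAt h (-(K * g t / f t * exp (-K * t))) t := by
    intro t
    refine ((((hasDerivAt_const t K).fun_div (hd t) (hf t).ne').sub_const 1).mul
      ((hasDerivAt_id' t).const_mul (-K)).exp).congr_deriv ?_
    have := (hf t).ne'
    field_simp
    ring
  have h_anti : StrictAnti h := strictAnti_of_hasDerivAt_neg h_deriv fun t => by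
    have := hf t; have := hg t
    exact neg_neg_of_pos (by positivity)
  have h_lower : ∀ t, -exp (-K * t) < h t := fun t => by
    have : 0 < K / f t := div_pos hK (hf t)
    simp only [h_def]
    nlinarith [exp_pos (-K * t)]
  have h_neg : h (t₀ + 1) < 0 := by
    have : K / f t₀ ≤ 1 := (div_le_one (hf t₀)).2 hKf
    have : h t₀ ≤ 0 := mul_nonpos_of_nonpos_of_nonneg (by linarith) (exp_pos _).le
    linarith [h_anti (lt_add_one t₀)]
  have h_decay : Tendsto (fun t => exp (-K * t)) atTop (𝓝 0) :=
    tendsto_exp_atBot.comp (tendsto_id.const_mul_atTop_of_neg (neg_neg_of_pos hK))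
  obtain ⟨t, ht_small, ht_late⟩ :=
    ((h_decay.eventually (gt_mem_nhds (neg_pos.2 h_neg))).and
      (eventually_ge_atTop (t₀ + 1))).exists
  linarith [h_lower t, h_anti.antitone ht_late]

theorem lt_of_hasDerivAt_mul_sub_sub {K : ℝ} (hK : 0 < K) {f g : ℝ → ℝ}
    (hf : ∀ t, 0 < f t) (hg : ∀ t, 0 < g t)
    (hd : ∀ t, HasDerivAt f (f t * (K - g t - f t)) t) (t₀ : ℝ) : f t₀ < K := by
  have hd_rev : ∀ t, HasDerivAt (fun t => f (-t)) (f (-t) * (f (-t) - K + g (-t))) t :=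
    fun t => ((hd (-t)).comp t (hasDerivAt_neg t)).congr_deriv (by ring)
  simpa using lt_of_hasDerivAt_mul_sub_add hK (fun t => hf (-t)) (fun t => hg (-t)) hd_rev (-t₀)

/-- a globally defined solution of the quadratic system in the
open region X,Y,Z,W > 0 stays in the box
(0,(N-p)/(p-1)) × (0,(N-q)/(q-1)) × (0,N+a) × (0,N+b). -/
theorem trajectory_stays_in_box
    (N p q a b s m δ μ : ℝ)
    (hp : 1 < p) (hpN : p < N) (hq : 1 < q) (hqN : q < N)
    (hpa : 0 < p + a) (hqb : 0 < q + b)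
    (hs : 0 ≤ s) (hm : 0 ≤ m) (hδ : 0 < δ) (hμ : 0 < μ)
    (X Y Z W : ℝ → ℝ)
    (hpos : ∀ t, 0 < X t ∧ 0 < Y t ∧ 0 < Z t ∧ 0 < W t)
    (hX : ∀ t, HasDerivAt X (X t * (X t - (N - p) / (p - 1) + Z t / (p - 1))) t)
    (hY : ∀ t, HasDerivAt Y (Y t * (Y t - (N - q) / (q - 1) + W t / (q - 1))) t)
    (hZ : ∀ t, HasDerivAt Z (Z t * (N + a - s * X t - δ * Y t - Z t)) t)
    (hW : ∀ t, HasDerivAt W (W t * (N + b - μ * X t - m * Y t - W t)) t) :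
    ∀ t : ℝ, X t < (N - p) / (p - 1) ∧ Y t < (N - q) / (q - 1) ∧
      Z t < N + a ∧ W t < N + b := by
  intro t
  refine ⟨?_, ?_, ?_, ?_⟩
  · exact lt_of_hasDerivAt_mul_sub_add (div_pos (by linarith) (by linarith))
      (fun t => (hpos t).1) (fun t => div_pos (hpos t).2.2.1 (by linarith)) hX t
  · exact lt_of_hasDerivAt_mul_sub_add (div_pos (by linarith) (by linarith))
      (fun t => (hpos t).2.1) (fun t => div_pos (hpos t).2.2.2 (by linarith)) hY t
  · exact lt_of_hasDerivAt_mul_sub_sub (g := fun t => s * X t + δ * Y t) (by linarith)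
      (fun t => (hpos t).2.2.1)
      (fun t => add_pos_of_nonneg_of_pos (mul_nonneg hs (hpos t).1.le) (mul_pos hδ (hpos t).2.1))
      (fun t => (hZ t).congr_deriv (by ring)) t
  · exact lt_of_hasDerivAt_mul_sub_sub (g := fun t => μ * X t + m * Y t) (by linarith)
      (fun t => (hpos t).2.2.2)
      (fun t => add_pos_of_pos_of_nonneg (mul_pos hμ (hpos t).1) (mul_nonneg hm (hpos t).2.1.le))
      (fun t => (hW t).congr_deriv (by ring)) t
end

section
/- Assume s ≥ (N(p-1) + p + pa)/(N-p). Let (u,v) be a positive radial solution of -Δ_p u = r^a u^s v^δ, -Δ_q v = r^b u^μ v^m with u, v regular at 0. Then the function F(r) = r^N[|u'|^p/p' + r^a u^{s+1} v^δ/(s+1) + ((N-p)/p) u|u'|^{p-2}u'/r] satisfies F(0) = 0 and F'(r) = r^{N-1+a} v^δ u^{s+1}[(N+a)/(s+1) - (N-p)/p - δY/(s+1)] where Y = -rv'/v; in particular F is nonincreasing wherever v is nonincreasing. -/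
/-!
Write `G = r^(N-1) |u'|^(p-2) u'` for the flux, so that the equation reads
`G' = -r^(N-1+a) u^s v^δ`. Since `u'` itself need not be differentiable, the kinetic term is
rewritten through `w = -G > 0` as `r^N |u'|^p / p' = w^p' r^(N-(N-1)p') / p'`, and the cross term
as `(N-p)/p · u G`; only `G`, `u`, `v` are then differentiated. In the sum of the three
derivatives the terms in `u'` cancel, leaving
`r^(N-1+a) v^δ u^(s+1) [(N+a)/(s+1) - (N-p)/p - δY/(s+1)]`. The critical bound on `s` is exactly
`p(N+a) ≤ (N-p)(s+1)`, and `Y ≥ 0` since `v' ≤ 0`, so the bracket is nonpositive.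
-/

open Real Set Filter Topology

lemma abs_rpow_sub_two_mul_of_neg {x : ℝ} (hx : x < 0) (p : ℝ) :
    |x| ^ (p - 2) * x = -|x| ^ (p - 1) := by
  have hx' : 0 < |x| := abs_pos.mpr hx.ne
  rw [show p - 1 = p - 2 + 1 by ring, rpow_add hx', rpow_one, abs_of_neg hx]
  ring

lemma abs_rpow_sub_two_mul_mul_self {x : ℝ} (hx : x ≠ 0) (p : ℝ) :
    |x| ^ (p - 2) * x * x = |x| ^ p := by
  have hx' : 0 < |x| := abs_pos.mpr hx
  rw [mul_assoc, ← abs_mul_abs_self, ← mul_assoc, ← rpow_add_one hx'.ne',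
    ← rpow_add_one hx'.ne']
  ring_nf

lemma rpow_mul_rpow_rpow_mul_rpow {ρ y : ℝ} (hρ : 0 < ρ) (hy : 0 < y) (α β t κ : ℝ) :
    (ρ ^ α * y ^ β) ^ t * ρ ^ κ = ρ ^ (α * t + κ) * y ^ (β * t) := by
  rw [mul_rpow (by positivity) (by positivity), ← rpow_mul hρ.le, ← rpow_mul hy.le,
    rpow_add hρ]
  ring

lemma hasDerivAt_kinetic_term {N p g r : ℝ} {u' : ℝ → ℝ} (hp : 1 < p) (hr : 0 < r)
    (hneg : ∀ᶠ ρ in 𝓝 r, u' ρ < 0)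
    (hflux : HasDerivAt (fun ρ => ρ ^ (N - 1) * |u' ρ| ^ (p - 2) * u' ρ) g r) :
    HasDerivAt (fun ρ => ρ ^ N * (|u' ρ| ^ p / (p / (p - 1))))
      (g * r * u' r - (N - p) / p * (r ^ N * |u' r| ^ p / r)) r := by
  set q := p / (p - 1)
  have hp1 : p - 1 ≠ 0 := by linarith
  have hq0 : q ≠ 0 := div_ne_zero (by linarith) hp1
  set κ := N - (N - 1) * q
  set w : ℝ → ℝ := fun ρ => -(ρ ^ (N - 1) * |u' ρ| ^ (p - 2) * u' ρ)
  have hw_eq : ∀ ρ, u' ρ < 0 → w ρ = ρ ^ (N - 1) * |u' ρ| ^ (p - 1) := fun ρ hρ => by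
    simp only [w, mul_assoc, abs_rpow_sub_two_mul_of_neg hρ]; ring
  have hw : HasDerivAt w (-g) r := hflux.neg
  have hu'r := hneg.self_of_nhds
  have hA : 0 < |u' r| := abs_pos.mpr hu'r.ne
  have hwr : 0 < w r := by rw [hw_eq r hu'r]; positivity
  have hNq : (N - 1) * q + κ = N := by ring
  have hpq : (p - 1) * q = p := by simp only [q]; field_simp
  have hwq : w r ^ q * r ^ κ = r ^ N * |u' r| ^ p := by
    rw [hw_eq r hu'r, rpow_mul_rpow_rpow_mul_rpow hr hA, hNq, hpq]
  have hwq1 : w r ^ (q - 1) * r ^ κ = -(r * u' r) := by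
    rw [hw_eq r hu'r, rpow_mul_rpow_rpow_mul_rpow hr hA, show (N - 1) * (q - 1) + κ = 1 by ring,
      show (p - 1) * (q - 1) = 1 by linear_combination hpq, rpow_one, rpow_one, abs_of_neg hu'r]
    ring
  have hκ : κ / q = -((N - p) / p) := by simp only [κ, q]; field_simp; ring
  have hderiv := ((hw.rpow_const (p := q) (Or.inl hwr.ne')).mul
    (hasDerivAt_rpow_const (p := κ) (Or.inl hr.ne'))).div_const q
  refine (hderiv.congr_of_eventuallyEq ?_).congr_deriv ?_
  · filter_upwards [hneg, lt_mem_nhds hr] with ρ hρ hρ0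
    simp only [Pi.mul_apply]
    rw [hw_eq ρ hρ, rpow_mul_rpow_rpow_mul_rpow hρ0 (abs_pos.mpr hρ.ne), hNq, hpq]
    ring
  · calc (-g * q * w r ^ (q - 1) * r ^ κ + w r ^ q * (κ * r ^ (κ - 1))) / q
        = -g * (w r ^ (q - 1) * r ^ κ) + κ / q * (w r ^ q * r ^ κ) / r := by
          rw [rpow_sub_one hr.ne']; field_simp
      _ = _ := by rw [hwq1, hwq, hκ]; ring

lemma hasDerivAt_cross_term {N p c g r : ℝ} {u u' : ℝ → ℝ} (hr : r ≠ 0)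
    (hu'r : u' r ≠ 0) (hu : HasDerivAt u (u' r) r)
    (hflux : HasDerivAt (fun ρ => ρ ^ (N - 1) * |u' ρ| ^ (p - 2) * u' ρ) g r) :
    HasDerivAt (fun ρ => ρ ^ N * (c * u ρ * |u' ρ| ^ (p - 2) * u' ρ / ρ))
      (c * (r ^ N * |u' r| ^ p / r + u r * g)) r := by
  refine ((hu.mul hflux).const_mul c |>.congr_of_eventuallyEq ?_).congr_deriv ?_
  · filter_upwards [eventually_ne_nhds hr] with ρ hρ
    simp only [Pi.mul_apply]
    rw [rpow_sub_one hρ]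
    field_simp
  · rw [rpow_sub_one hr]
    linear_combination c * r ^ N / r * abs_rpow_sub_two_mul_mul_self hu'r p

lemma hasDerivAt_potential_term {N a s δ r du dv : ℝ} {u v : ℝ → ℝ} (hr : 0 < r)
    (hs : s + 1 ≠ 0) (hu : HasDerivAt u du r) (hv : HasDerivAt v dv r) (hur : 0 < u r)
    (hvr : 0 < v r) :
    HasDerivAt (fun ρ => ρ ^ N * (ρ ^ a * u ρ ^ (s + 1) * v ρ ^ δ / (s + 1)))
      (r ^ (N - 1 + a) * ((N + a) / (s + 1) * u r ^ (s + 1) * v r ^ δ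
        + r * u r ^ s * du * v r ^ δ
        + δ / (s + 1) * r * u r ^ (s + 1) * v r ^ (δ - 1) * dv)) r := by
  have hderiv := ((hasDerivAt_rpow_const (p := N + a) (Or.inl hr.ne')).mul
    ((hu.rpow_const (p := s + 1) (Or.inl hur.ne')).mul
      (hv.rpow_const (p := δ) (Or.inl hvr.ne')))).div_const (s + 1)
  refine (hderiv.congr_of_eventuallyEq ?_).congr_deriv ?_
  · filter_upwards [lt_mem_nhds hr] with ρ hρ
    simp only [Pi.mul_apply]
    rw [rpow_add hρ]
    ring
  · simp only [Pi.mul_apply]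
    rw [add_sub_cancel_right, show N + a - 1 = N - 1 + a by ring,
      show N + a = N - 1 + a + 1 by ring, rpow_add_one hr.ne']
    field_simp
    ring

lemma critical_exponent_add_one {N p a : ℝ} (hNp : N ≠ p) :
    (N * (p - 1) + p + p * a) / (N - p) + 1 = p * (N + a) / (N - p) := by
  field_simp [sub_ne_zero.mpr hNp]
  ring

lemma div_add_one_le_of_critical_le {N p a s : ℝ} (hp : 0 < p) (hpN : p < N) (hpa : 0 < p + a)
    (hs : (N * (p - 1) + p + p * a) / (N - p) ≤ s) :
    0 < s + 1 ∧ (N + a) / (s + 1) ≤ (N - p) / p := by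
  have hNp : 0 < N - p := by linarith
  have hs1 : p * (N + a) / (N - p) ≤ s + 1 := by
    have := critical_exponent_add_one (a := a) hpN.ne'; linarith
  have hs1pos : 0 < s + 1 := lt_of_lt_of_le (div_pos (mul_pos hp (by linarith)) hNp) hs1
  refine ⟨hs1pos, ?_⟩
  rw [div_le_iff₀ hNp] at hs1
  rw [div_le_div_iff₀ hs1pos hp]
  linarith

/-- assume s ≥ (N(p-1)+p+pa)/(N-p).  For a positive radial
solution with u', v' < 0, the Pohozaev-type function
F(r) = r^N[|u'|^p/p' + r^a u^{s+1}v^δ/(s+1) + ((N-p)/p)u|u'|^{p-2}u'/r]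
satisfies F(0) = 0 and
F'(r) = r^{N-1+a} v^δ u^{s+1}[(N+a)/(s+1) - (N-p)/p - δY/(s+1)], Y = -rv'/v;
in particular F' ≤ 0 since v is nonincreasing. -/
theorem pohozaev_F_monotone
    (N p a δ s : ℝ) (R : ℝ)
    (hp : 1 < p) (hpN : p < N) (hpa : 0 < p + a) (hδ : 0 < δ)
    (hscrit : (N * (p - 1) + p + p * a) / (N - p) ≤ s)
    (u v u' v' : ℝ → ℝ)
    (hu : ∀ r ∈ Set.Ioo (0:ℝ) R, HasDerivAt u (u' r) r)
    (hv : ∀ r ∈ Set.Ioo (0:ℝ) R, HasDerivAt v (v' r) r)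
    (hupos : ∀ r ∈ Set.Ioo (0:ℝ) R, 0 < u r)
    (hvpos : ∀ r ∈ Set.Ioo (0:ℝ) R, 0 < v r)
    (hu'neg : ∀ r ∈ Set.Ioo (0:ℝ) R, u' r < 0)
    (hv'neg : ∀ r ∈ Set.Ioo (0:ℝ) R, v' r < 0)
    (hpde : ∀ r ∈ Set.Ioo (0:ℝ) R,
      HasDerivAt (fun ρ => ρ ^ (N - 1) * |u' ρ| ^ (p - 2) * u' ρ)
        (-(r ^ (N - 1 + a) * u r ^ s * v r ^ δ)) r)
    (F : ℝ → ℝ)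
    (hF : ∀ r, F r = r ^ N * (|u' r| ^ p / (p / (p - 1))
        + r ^ a * u r ^ (s + 1) * v r ^ δ / (s + 1)
        + (N - p) / p * u r * |u' r| ^ (p - 2) * u' r / r)) :
    F 0 = 0 ∧
    ∀ r ∈ Set.Ioo (0:ℝ) R,
      HasDerivAt F
        (r ^ (N - 1 + a) * v r ^ δ * u r ^ (s + 1) *
          ((N + a) / (s + 1) - (N - p) / p - δ * (-(r * v' r) / v r) / (s + 1))) r ∧
      r ^ (N - 1 + a) * v r ^ δ * u r ^ (s + 1) *
          ((N + a) / (s + 1) - (N - p) / p - δ * (-(r * v' r) / v r) / (s + 1)) ≤ 0 := by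
  obtain ⟨hs1, hcrit⟩ := div_add_one_le_of_critical_le (by linarith) hpN hpa hscrit
  refine ⟨by rw [hF 0, zero_rpow (by linarith), zero_mul], fun r hr => ⟨?_, ?_⟩⟩
  · have hneg : ∀ᶠ ρ in 𝓝 r, u' ρ < 0 := eventually_of_mem (isOpen_Ioo.mem_nhds hr) hu'neg
    have hsum := ((hasDerivAt_kinetic_term hp hr.1 hneg (hpde r hr)).add
      (hasDerivAt_potential_term (N := N) (a := a) (δ := δ) hr.1 hs1.ne' (hu r hr) (hv r hr)
        (hupos r hr) (hvpos r hr))).add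
      (hasDerivAt_cross_term (c := (N - p) / p) hr.1.ne' (hu'neg r hr).ne (hu r hr) (hpde r hr))
    refine (hsum.congr_of_eventuallyEq (Eventually.of_forall fun ρ => ?_)).congr_deriv ?_
    · rw [hF, Pi.add_apply, Pi.add_apply, mul_add, mul_add]
    · have hr0 : r ≠ 0 := hr.1.ne'
      rw [rpow_sub_one (hvpos r hr).ne', rpow_add_one (hupos r hr).ne']
      field_simp
      ring
  · have hr0 := hr.1
    have hu0 := hupos r hr
    have hv0 := hvpos r hr
    have hY : 0 < -(r * v' r) / v r :=
      div_pos (neg_pos.mpr (mul_neg_of_pos_of_neg hr0 (hv'neg r hr))) hv0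
    have hδY : 0 ≤ δ * (-(r * v' r) / v r) / (s + 1) := by positivity
    exact mul_nonpos_of_nonneg_of_nonpos (by positivity) (by linarith)
end

section
/- For the Hamiltonian system -Δu = r^a v^δ, -Δv = r^b u^μ (p = q = 2 < N, δμ > 1), the Pohozaev function E_H(r) = r^N[u'v' + r^b u^{μ+1}/(μ+1) + r^a v^{δ+1}/(δ+1) + ((N+a)/(δ+1)) v u'/r + ((N+b)/(μ+1)) u v'/r] satisfies E_H'(r) = r^{N-1} u' v' ((N+a)/(δ+1) + (N+b)/(μ+1) - (N-2)). In particular E_H is constant along radial solutions if and only if (N+a)/(δ+1) + (N+b)/(μ+1) = N-2 (unless u'v' vanishes identically). -/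
/-!
Write `E_H` through the fluxes `W = r^(N-1) u'` and `Z = r^(N-1) v'`, whose derivatives are given
by the system. Differentiating, the terms `r^(2-N) W' Z`, `r^(2-N) W Z'` cancel the derivatives
of the potential terms `r^(N+b) u^(μ+1)/(μ+1)`, `r^(N+a) v^(δ+1)/(δ+1)` up to contributions that
in turn cancel against `(N+a)/(δ+1) v W'` and `(N+b)/(μ+1) u Z'`; what survives is
`r^(N-1) u' v' ((N+a)/(δ+1) + (N+b)/(μ+1) - (N-2))`. On an interval where `u' v'` does not vanish
identically, `E_H` is therefore constant exactly when the bracket vanishes.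
-/

open Real Set Filter Topology

theorem forall_eq_iff_of_hasDerivAt_mul_const {f g : ℝ → ℝ} {s : Set ℝ} {c : ℝ} (hs : IsOpen s)
    (hs' : IsPreconnected s) (hf : ∀ x ∈ s, HasDerivAt f (g x * c) x) (hg : ∃ x ∈ s, g x ≠ 0) :
    (∀ x ∈ s, ∀ y ∈ s, f x = f y) ↔ c = 0 := by
  constructor
  · intro hconst
    obtain ⟨x, hx, hgx⟩ := hg
    have hf0 : HasDerivAt f 0 x :=
      (hasDerivAt_const x (f x)).congr_of_eventuallyEq
        (eventually_of_mem (hs.mem_nhds hx) fun y hy => hconst y hy x hx)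
    exact (mul_eq_zero.mp ((hf x hx).unique hf0)).resolve_left hgx
  · rintro rfl x hx y hy
    refine hs.is_const_of_deriv_eq_zero hs'
      (fun z hz => (hf z hz).differentiableAt.differentiableWithinAt) (fun z hz => ?_) hx hy
    simpa using (hf z hz).deriv

noncomputable def hamiltonianPohozaev (N a b δ μ : ℝ) (u v u' v' : ℝ → ℝ) (r : ℝ) : ℝ :=
  r ^ N * (u' r * v' r + r ^ b * u r ^ (μ + 1) / (μ + 1) + r ^ a * v r ^ (δ + 1) / (δ + 1)
    + (N + a) / (δ + 1) * v r * u' r / r + (N + b) / (μ + 1) * u r * v' r / r)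

section Pohozaev

variable {N a b δ μ : ℝ} {u v u' v' : ℝ → ℝ}

theorem hamiltonianPohozaev_eq_flux {ρ : ℝ} (hρ : 0 < ρ) :
    hamiltonianPohozaev N a b δ μ u v u' v' ρ =
      ρ ^ (2 - N) * (ρ ^ (N - 1) * u' ρ) * (ρ ^ (N - 1) * v' ρ)
        + ρ ^ (N + b) * u ρ ^ (μ + 1) / (μ + 1) + ρ ^ (N + a) * v ρ ^ (δ + 1) / (δ + 1)
        + (N + a) / (δ + 1) * (v ρ * (ρ ^ (N - 1) * u' ρ))
        + (N + b) / (μ + 1) * (u ρ * (ρ ^ (N - 1) * v' ρ)) := by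
  have hρN : ρ ^ N ≠ 0 := (rpow_pos_of_pos hρ N).ne'
  simp only [hamiltonianPohozaev, rpow_sub hρ, rpow_add hρ, rpow_one, rpow_two]
  field_simp

theorem hasDerivAt_hamiltonianPohozaev {r : ℝ} (hr : 0 < r) (hδ : δ + 1 ≠ 0) (hμ : μ + 1 ≠ 0)
    (hu : HasDerivAt u (u' r) r) (hv : HasDerivAt v (v' r) r) (hur : 0 < u r) (hvr : 0 < v r)
    (hpde1 : HasDerivAt (fun ρ => ρ ^ (N - 1) * u' ρ) (-(r ^ (N - 1 + a) * v r ^ δ)) r)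
    (hpde2 : HasDerivAt (fun ρ => ρ ^ (N - 1) * v' ρ) (-(r ^ (N - 1 + b) * u r ^ μ)) r) :
    HasDerivAt (hamiltonianPohozaev N a b δ μ u v u' v')
      (r ^ (N - 1) * u' r * v' r * ((N + a) / (δ + 1) + (N + b) / (μ + 1) - (N - 2))) r := by
  have hpow (p : ℝ) : HasDerivAt (fun ρ : ℝ => ρ ^ p) (p * r ^ (p - 1)) r :=
    hasDerivAt_rpow_const (Or.inl hr.ne')
  have hflux := ((((((hpow (2 - N)).mul hpde1).mul hpde2).add
      (((hpow (N + b)).mul (hu.rpow_const (p := μ + 1) (Or.inl hur.ne'))).div_const (μ + 1))).add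
      (((hpow (N + a)).mul (hv.rpow_const (p := δ + 1) (Or.inl hvr.ne'))).div_const (δ + 1))).add
      ((hv.mul hpde1).const_mul ((N + a) / (δ + 1)))).add
      ((hu.mul hpde2).const_mul ((N + b) / (μ + 1)))
  refine (hflux.congr_of_eventuallyEq ?_).congr_deriv ?_
  · filter_upwards [Ioi_mem_nhds hr] with ρ hρ
    exact hamiltonianPohozaev_eq_flux hρ
  · have hrN : r ^ N ≠ 0 := (rpow_pos_of_pos hr N).ne'
    simp only [Pi.mul_apply, add_sub_cancel_right, rpow_sub hr, rpow_add hr, rpow_add hur,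
      rpow_add hvr, rpow_one, rpow_two]
    field_simp
    ring

end Pohozaev

theorem hamiltonian_pohozaev_general
    (N a b δ μ : ℝ) (R₁ R₂ : ℝ)
    (hδ : 0 < δ) (hμ : 0 < μ)
    (hR₁ : 0 < R₁)
    (u v u' v' : ℝ → ℝ)
    (hu : ∀ r ∈ Set.Ioo R₁ R₂, HasDerivAt u (u' r) r)
    (hv : ∀ r ∈ Set.Ioo R₁ R₂, HasDerivAt v (v' r) r)
    (hupos : ∀ r ∈ Set.Ioo R₁ R₂, 0 < u r)
    (hvpos : ∀ r ∈ Set.Ioo R₁ R₂, 0 < v r)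
    (hpde1 : ∀ r ∈ Set.Ioo R₁ R₂,
      HasDerivAt (fun ρ => ρ ^ (N - 1) * u' ρ) (-(r ^ (N - 1 + a) * v r ^ δ)) r)
    (hpde2 : ∀ r ∈ Set.Ioo R₁ R₂,
      HasDerivAt (fun ρ => ρ ^ (N - 1) * v' ρ) (-(r ^ (N - 1 + b) * u r ^ μ)) r)
    (E : ℝ → ℝ)
    (hE : ∀ r, E r = r ^ N * (u' r * v' r + r ^ b * u r ^ (μ + 1) / (μ + 1)
        + r ^ a * v r ^ (δ + 1) / (δ + 1)
        + (N + a) / (δ + 1) * v r * u' r / r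
        + (N + b) / (μ + 1) * u r * v' r / r)) :
    (∀ r ∈ Set.Ioo R₁ R₂,
      HasDerivAt E
        (r ^ (N - 1) * u' r * v' r * ((N + a) / (δ + 1) + (N + b) / (μ + 1) - (N - 2))) r) ∧
    ((∃ r ∈ Set.Ioo R₁ R₂, u' r * v' r ≠ 0) →
      ((∀ r₁ ∈ Set.Ioo R₁ R₂, ∀ r₂ ∈ Set.Ioo R₁ R₂, E r₁ = E r₂) ↔
        (N + a) / (δ + 1) + (N + b) / (μ + 1) = N - 2)) := by
  obtain rfl : E = hamiltonianPohozaev N a b δ μ u v u' v' := funext hE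
  have hderiv : ∀ r ∈ Ioo R₁ R₂, HasDerivAt (hamiltonianPohozaev N a b δ μ u v u' v')
      (r ^ (N - 1) * u' r * v' r * ((N + a) / (δ + 1) + (N + b) / (μ + 1) - (N - 2))) r :=
    fun r hr => hasDerivAt_hamiltonianPohozaev (hR₁.trans hr.1) (by positivity) (by positivity)
      (hu r hr) (hv r hr) (hupos r hr) (hvpos r hr) (hpde1 r hr) (hpde2 r hr)
  refine ⟨hderiv, fun ⟨r, hr, huv⟩ => ?_⟩
  rw [forall_eq_iff_of_hasDerivAt_mul_const isOpen_Ioo isPreconnected_Ioo hderiv, sub_eq_zero]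
  refine ⟨r, hr, ?_⟩
  rw [mul_assoc]
  exact mul_ne_zero (rpow_pos_of_pos (hR₁.trans hr.1) _).ne' huv

/-- for the Hamiltonian system -Δu = r^a v^δ, -Δv = r^b u^μ,
the Pohozaev function E_H satisfies
E_H'(r) = r^{N-1}u'v'((N+a)/(δ+1) + (N+b)/(μ+1) - (N-2)); in particular
E_H is constant along radial solutions (with u'v' not identically zero)
iff (N+a)/(δ+1) + (N+b)/(μ+1) = N-2. -/
theorem hamiltonian_pohozaev
    (N a b δ μ : ℝ) (R₁ R₂ : ℝ)
    (hN : 2 < N) (ha : -2 < a) (hb : -2 < b)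
    (hδ : 0 < δ) (hμ : 0 < μ) (hδμ : 1 < δ * μ)
    (hR₁ : 0 < R₁) (hR : R₁ < R₂)
    (u v u' v' : ℝ → ℝ)
    (hu : ∀ r ∈ Set.Ioo R₁ R₂, HasDerivAt u (u' r) r)
    (hv : ∀ r ∈ Set.Ioo R₁ R₂, HasDerivAt v (v' r) r)
    (hupos : ∀ r ∈ Set.Ioo R₁ R₂, 0 < u r)
    (hvpos : ∀ r ∈ Set.Ioo R₁ R₂, 0 < v r)
    (hpde1 : ∀ r ∈ Set.Ioo R₁ R₂,
      HasDerivAt (fun ρ => ρ ^ (N - 1) * u' ρ) (-(r ^ (N - 1 + a) * v r ^ δ)) r)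
    (hpde2 : ∀ r ∈ Set.Ioo R₁ R₂,
      HasDerivAt (fun ρ => ρ ^ (N - 1) * v' ρ) (-(r ^ (N - 1 + b) * u r ^ μ)) r)
    (E : ℝ → ℝ)
    (hE : ∀ r, E r = r ^ N * (u' r * v' r + r ^ b * u r ^ (μ + 1) / (μ + 1)
        + r ^ a * v r ^ (δ + 1) / (δ + 1)
        + (N + a) / (δ + 1) * v r * u' r / r
        + (N + b) / (μ + 1) * u r * v' r / r)) :
    (∀ r ∈ Set.Ioo R₁ R₂,
      HasDerivAt E
        (r ^ (N - 1) * u' r * v' r * ((N + a) / (δ + 1) + (N + b) / (μ + 1) - (N - 2))) r) ∧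
    ((∃ r ∈ Set.Ioo R₁ R₂, u' r * v' r ≠ 0) →
      ((∀ r₁ ∈ Set.Ioo R₁ R₂, ∀ r₂ ∈ Set.Ioo R₁ R₂, E r₁ = E r₂) ↔
        (N + a) / (δ + 1) + (N + b) / (μ + 1) = N - 2)) :=
  hamiltonian_pohozaev_general N a b δ μ R₁ R₂ hδ hμ hR₁ u v u' v' hu hv hupos hvpos hpde1 hpde2 E
    hE
end

section
/- In the critical Hamiltonian case (N+a)/(δ+1) + (N+b)/(μ+1) = N-2, with X = -ru'/u, Y = -rv'/v, Z = r^{1+a}v^δ/|u'|, W = r^{1+b}u^μ/|v'|, the Pohozaev function can be written E_H(r) = r^{N-2} u v [XY - Y(N+b-W)/(μ+1) - (N+a-Z)X/(δ+1)]. Consequently, if at some radius R a positive solution satisfies X(R) = Y(R) = N-2 with Z(R), W(R) > 0, then E_H(R) > 0. -/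
/-!
Multiplying out `r ^ (N - 2) * u * v` turns each product of a variable `X, Y, Z, W` with `u, v`
back into the terms of `E`, which gives the quadratic form. At `X = Y = N - 2`, the critical
relation cancels everything but `(N - 2) * (W / (μ + 1) + Z / (δ + 1))`, which is positive.
-/

/-- The identity holds termwise in `1 / (μ + 1)` and `1 / (δ + 1)`; the signs of `u'` and `v'`
enter through `v' / |v'| = u' / |u'| = -1`. -/
theorem pohozaev_eq_quadratic_form {N a b δ μ r u v u' v' : ℝ} (hr : 0 < r) (hu : 0 < u)
    (hv : 0 < v) (hu' : u' < 0) (hv' : v' < 0) :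
    r ^ N * (u' * v' + r ^ b * u ^ (μ + 1) / (μ + 1) + r ^ a * v ^ (δ + 1) / (δ + 1)
        + (N + a) / (δ + 1) * v * u' / r + (N + b) / (μ + 1) * u * v' / r)
      = r ^ (N - 2) * u * v * (-(r * u') / u * (-(r * v') / v)
        - -(r * v') / v * (N + b - r ^ (1 + b) * u ^ μ / |v'|) / (μ + 1)
        - (N + a - r ^ (1 + a) * v ^ δ / |u'|) * (-(r * u') / u) / (δ + 1)) := by
  have hrN : r ^ N = r ^ (N - 2) * r ^ 2 := by
    rw [← Real.rpow_natCast, ← Real.rpow_add hr]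
    norm_num
  rw [hrN, Real.rpow_add hr, Real.rpow_add hr, Real.rpow_one, Real.rpow_add_one hu.ne',
    Real.rpow_add_one hv.ne', abs_of_neg hu', abs_of_neg hv']
  simp only [div_eq_mul_inv _ (μ + 1), div_eq_mul_inv _ (δ + 1)]
  generalize (μ + 1)⁻¹ = m
  generalize (δ + 1)⁻¹ = d
  field_simp [hu'.ne, hv'.ne]
  ring

theorem quadratic_form_eq_of_critical {N a b δ μ Z W : ℝ}
    (hcrit : (N + a) / (δ + 1) + (N + b) / (μ + 1) = N - 2) :
    (N - 2) * (N - 2) - (N - 2) * (N + b - W) / (μ + 1) - (N + a - Z) * (N - 2) / (δ + 1)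
      = (N - 2) * (W / (μ + 1) + Z / (δ + 1)) := by
  linear_combination (2 - N) * hcrit

theorem quadratic_form_pos_of_critical {N a b δ μ Z W : ℝ} (hN : 2 < N) (hδ : -1 < δ)
    (hμ : -1 < μ) (hcrit : (N + a) / (δ + 1) + (N + b) / (μ + 1) = N - 2) (hZ : 0 < Z)
    (hW : 0 < W) :
    0 < (N - 2) * (N - 2) - (N - 2) * (N + b - W) / (μ + 1) - (N + a - Z) * (N - 2) / (δ + 1) := by
  rw [quadratic_form_eq_of_critical hcrit]
  have hμ1 : 0 < μ + 1 := by linarith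
  have hδ1 : 0 < δ + 1 := by linarith
  have hN2 : 0 < N - 2 := by linarith
  positivity

theorem hamiltonian_pohozaev_quadratic_form_general
    (N a b δ μ : ℝ) (R₁ R₂ : ℝ)
    (hN : 2 < N)
    (hδ : 0 < δ) (hμ : 0 < μ)
    (hcrit : (N + a) / (δ + 1) + (N + b) / (μ + 1) = N - 2)
    (hR₁ : 0 < R₁)
    (u v u' v' : ℝ → ℝ)
    (hupos : ∀ r ∈ Set.Ioo R₁ R₂, 0 < u r)
    (hvpos : ∀ r ∈ Set.Ioo R₁ R₂, 0 < v r)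
    (hu'neg : ∀ r ∈ Set.Ioo R₁ R₂, u' r < 0)
    (hv'neg : ∀ r ∈ Set.Ioo R₁ R₂, v' r < 0)
    (E X Y Z W : ℝ → ℝ)
    (hE : ∀ r, E r = r ^ N * (u' r * v' r + r ^ b * u r ^ (μ + 1) / (μ + 1)
        + r ^ a * v r ^ (δ + 1) / (δ + 1)
        + (N + a) / (δ + 1) * v r * u' r / r
        + (N + b) / (μ + 1) * u r * v' r / r))
    (hX : ∀ r, X r = -(r * u' r) / u r)
    (hY : ∀ r, Y r = -(r * v' r) / v r)
    (hZ : ∀ r, Z r = r ^ (1 + a) * v r ^ δ / |u' r|)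
    (hW : ∀ r, W r = r ^ (1 + b) * u r ^ μ / |v' r|) :
    (∀ r ∈ Set.Ioo R₁ R₂,
      E r = r ^ (N - 2) * u r * v r *
        (X r * Y r - Y r * (N + b - W r) / (μ + 1) - (N + a - Z r) * X r / (δ + 1))) ∧
    (∀ R ∈ Set.Ioo R₁ R₂, X R = N - 2 → Y R = N - 2 → 0 < Z R → 0 < W R → 0 < E R) := by
  have hE_eq : ∀ r ∈ Set.Ioo R₁ R₂, E r = r ^ (N - 2) * u r * v r *
      (X r * Y r - Y r * (N + b - W r) / (μ + 1) - (N + a - Z r) * X r / (δ + 1)) := by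
    intro r hr
    rw [hE, hX, hY, hZ, hW]
    exact pohozaev_eq_quadratic_form (hR₁.trans hr.1) (hupos r hr) (hvpos r hr)
      (hu'neg r hr) (hv'neg r hr)
  refine ⟨hE_eq, fun R hR hXR hYR hZR hWR => ?_⟩
  have hRpos : 0 < R := hR₁.trans hR.1
  have hform := quadratic_form_pos_of_critical (a := a) (b := b) hN (by linarith) (by linarith)
    hcrit hZR hWR
  rw [hE_eq R hR, hXR, hYR]
  have := hupos R hR
  have := hvpos R hR
  positivity

/-- in the critical Hamiltonian case
(N+a)/(δ+1) + (N+b)/(μ+1) = N-2, with X = -ru'/u, Y = -rv'/v,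
Z = r^{1+a}v^δ/|u'|, W = r^{1+b}u^μ/|v'|, the Pohozaev function can be
written E_H(r) = r^{N-2}uv[XY - Y(N+b-W)/(μ+1) - (N+a-Z)X/(δ+1)];
consequently if X(R) = Y(R) = N-2 with Z(R), W(R) > 0 then E_H(R) > 0. -/
theorem hamiltonian_pohozaev_quadratic_form
    (N a b δ μ : ℝ) (R₁ R₂ : ℝ)
    (hN : 2 < N) (ha : -2 < a) (hb : -2 < b)
    (hδ : 0 < δ) (hμ : 0 < μ) (hδμ : 1 < δ * μ)
    (hcrit : (N + a) / (δ + 1) + (N + b) / (μ + 1) = N - 2)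
    (hR₁ : 0 < R₁) (hR : R₁ < R₂)
    (u v u' v' : ℝ → ℝ)
    (hupos : ∀ r ∈ Set.Ioo R₁ R₂, 0 < u r)
    (hvpos : ∀ r ∈ Set.Ioo R₁ R₂, 0 < v r)
    (hu'neg : ∀ r ∈ Set.Ioo R₁ R₂, u' r < 0)
    (hv'neg : ∀ r ∈ Set.Ioo R₁ R₂, v' r < 0)
    (E X Y Z W : ℝ → ℝ)
    (hE : ∀ r, E r = r ^ N * (u' r * v' r + r ^ b * u r ^ (μ + 1) / (μ + 1)
        + r ^ a * v r ^ (δ + 1) / (δ + 1)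
        + (N + a) / (δ + 1) * v r * u' r / r
        + (N + b) / (μ + 1) * u r * v' r / r))
    (hX : ∀ r, X r = -(r * u' r) / u r)
    (hY : ∀ r, Y r = -(r * v' r) / v r)
    (hZ : ∀ r, Z r = r ^ (1 + a) * v r ^ δ / |u' r|)
    (hW : ∀ r, W r = r ^ (1 + b) * u r ^ μ / |v' r|) :
    (∀ r ∈ Set.Ioo R₁ R₂,
      E r = r ^ (N - 2) * u r * v r *
        (X r * Y r - Y r * (N + b - W r) / (μ + 1) - (N + a - Z r) * X r / (δ + 1))) ∧
    (∀ R ∈ Set.Ioo R₁ R₂, X R = N - 2 → Y R = N - 2 → 0 < Z R → 0 < W R → 0 < E R) :=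
  hamiltonian_pohozaev_quadratic_form_general N a b δ μ R₁ R₂ hN hδ hμ hcrit hR₁ u v u' v' hupos
    hvpos hu'neg hv'neg E X Y Z W hE hX hY hZ hW
end

section
/- For the system -Δu = u^s v^δ, -Δv = u^μ v^s (N > 2, s > 0), define Φ(r) = r^N[u'v' + u^{μ+1}v^s/(μ+1) + u^s v^{δ+1}/(δ+1) + (N/(δ+1)) v u'/r + (N/(μ+1)) u v'/r + (s/(2(δ+1))) v u'²/u + (s/(2(μ+1))) u v'²/v]. Then along positive radial solutions, Φ'(r) = -(s/2) r^{N-3} u v B(X,Y) where X = -ru'/u, Y = -rv'/v, and B(X,Y) = β X²(N-2-X) + α Y²(N-2-Y) + XY[βX + αY + (2/s)(N-2 - Nα - Nβ)] with α = 1/(μ+1), β = 1/(δ+1). -/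
/-!
The radial equations give `u'' = -u^s v^δ - (N-1) u'/r` and `v'' = -u^μ v^s - (N-1) v'/r`.
Write `Φ = r^N E`. In `N r^(N-1) E + r^N E'` the source terms `u^s v^δ` and `u^μ v^s` cancel
identically: each is absorbed by the derivative of a potential term `u^s v^(δ+1)/(δ+1)`
(resp. `u^(μ+1) v^s/(μ+1)`) together with the terms `N v u'/r` and `s v u'^2/(2u)` (resp. their
`v`-analogues). So `Φ'` is a pure product-rule computation, a cubic polynomial in `X, Y`.
-/

theorem HasDerivAt.of_rpow_mul {w : ℝ → ℝ} {a D r : ℝ} (hr : 0 < r)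
    (h : HasDerivAt (fun ρ => ρ ^ a * w ρ) D r) :
    HasDerivAt w (D / r ^ a - a * w r / r) r := by
  have hw : w =ᶠ[nhds r] fun ρ => ρ ^ (-a) * (ρ ^ a * w ρ) := by
    filter_upwards [eventually_gt_nhds hr] with ρ hρ
    rw [Real.rpow_neg hρ.le, inv_mul_cancel_left₀ (Real.rpow_pos_of_pos hρ a).ne']
  refine (((Real.hasDerivAt_rpow_const (Or.inl hr.ne')).mul h).congr_of_eventuallyEq
    hw).congr_deriv ?_
  rw [Real.rpow_sub_one hr.ne', Real.rpow_neg hr.le]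
  field_simp
  ring

theorem HasDerivAt.of_radial_equation {w : ℝ → ℝ} {N f r : ℝ} (hr : 0 < r)
    (h : HasDerivAt (fun ρ => ρ ^ (N - 1) * w ρ) (-(r ^ (N - 1) * f)) r) :
    HasDerivAt w (-f - (N - 1) * w r / r) r := by
  refine (h.of_rpow_mul hr).congr_deriv ?_
  field_simp [(Real.rpow_pos_of_pos hr (N - 1)).ne']

theorem HasDerivAt.rpow_mul_rpow {u v : ℝ → ℝ} {u' v' a b r : ℝ}
    (hu : HasDerivAt u u' r) (hv : HasDerivAt v v' r) (hu0 : u r ≠ 0) (hv0 : v r ≠ 0) :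
    HasDerivAt (fun ρ => u ρ ^ a * v ρ ^ b)
      (u r ^ a * v r ^ b * (a * u' / u r + b * v' / v r)) r := by
  refine ((hu.rpow_const (Or.inl hu0)).mul (hv.rpow_const (Or.inl hv0))).congr_deriv ?_
  rw [Real.rpow_sub_one hu0, Real.rpow_sub_one hv0]
  field_simp

noncomputable def energyDensity (N s δ μ r u v u' v' : ℝ) : ℝ :=
  u' * v' + u ^ (μ + 1) * v ^ s / (μ + 1) + u ^ s * v ^ (δ + 1) / (δ + 1)
    + N / (δ + 1) * v * u' / r + N / (μ + 1) * u * v' / r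
    + s / (2 * (δ + 1)) * v * u' ^ 2 / u + s / (2 * (μ + 1)) * u * v' ^ 2 / v

noncomputable def energyDissipation (N s α β X Y : ℝ) : ℝ :=
  β * X ^ 2 * (N - 2 - X) + α * Y ^ 2 * (N - 2 - Y)
    + X * Y * (β * X + α * Y + (2 / s) * (N - 2 - N * α - N * β))

theorem hasDerivAt_energyDensity {N s δ μ r : ℝ} {u v u' v' : ℝ → ℝ}
    (hr : r ≠ 0) (hs : s ≠ 0) (hμ : μ + 1 ≠ 0) (hδ : δ + 1 ≠ 0) (hu0 : u r ≠ 0) (hv0 : v r ≠ 0)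
    (hu : HasDerivAt u (u' r) r) (hv : HasDerivAt v (v' r) r)
    (hu' : HasDerivAt u' (-(u r ^ s * v r ^ δ) - (N - 1) * u' r / r) r)
    (hv' : HasDerivAt v' (-(u r ^ μ * v r ^ s) - (N - 1) * v' r / r) r) :
    HasDerivAt (fun ρ => energyDensity N s δ μ ρ (u ρ) (v ρ) (u' ρ) (v' ρ))
      (-N * energyDensity N s δ μ r (u r) (v r) (u' r) (v' r) / r
        - s / 2 * u r * v r / r ^ 3 * energyDissipation N s (1 / (μ + 1)) (1 / (δ + 1))
          (-(r * u' r) / u r) (-(r * v' r) / v r)) r := by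
  have hid := hasDerivAt_id r
  refine ((((((hu'.mul hv').add
    ((hu.rpow_mul_rpow (a := μ + 1) (b := s) hv hu0 hv0).div_const (μ + 1))).add
    ((hu.rpow_mul_rpow (a := s) (b := δ + 1) hv hu0 hv0).div_const (δ + 1))).add
    ((((hasDerivAt_const r (N / (δ + 1))).mul hv).mul hu').div hid hr)).add
    ((((hasDerivAt_const r (N / (μ + 1))).mul hu).mul hv').div hid hr)).add
    ((((hasDerivAt_const r (s / (2 * (δ + 1)))).mul hv).mul (hu'.pow 2)).div hu hu0)).add
    ((((hasDerivAt_const r (s / (2 * (μ + 1)))).mul hu).mul (hv'.pow 2)).div hv hv0)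
    |>.congr_deriv ?_
  simp only [energyDensity, energyDissipation, id, Pi.mul_apply, Pi.pow_apply,
    Real.rpow_add_one hu0, Real.rpow_add_one hv0]
  field_simp
  ring

theorem phi_energy_derivative_general
    (N s δ μ α β : ℝ) (R₁ R₂ : ℝ)
    (hs : 0 < s) (hδ : 0 < δ) (hμ : 0 < μ)
    (hα : α = 1 / (μ + 1)) (hβ : β = 1 / (δ + 1))
    (hR₁ : 0 < R₁)
    (u v u' v' : ℝ → ℝ)
    (hu : ∀ r ∈ Set.Ioo R₁ R₂, HasDerivAt u (u' r) r)
    (hv : ∀ r ∈ Set.Ioo R₁ R₂, HasDerivAt v (v' r) r)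
    (hupos : ∀ r ∈ Set.Ioo R₁ R₂, 0 < u r)
    (hvpos : ∀ r ∈ Set.Ioo R₁ R₂, 0 < v r)
    (hpde1 : ∀ r ∈ Set.Ioo R₁ R₂,
      HasDerivAt (fun ρ => ρ ^ (N - 1) * u' ρ) (-(r ^ (N - 1) * u r ^ s * v r ^ δ)) r)
    (hpde2 : ∀ r ∈ Set.Ioo R₁ R₂,
      HasDerivAt (fun ρ => ρ ^ (N - 1) * v' ρ) (-(r ^ (N - 1) * u r ^ μ * v r ^ s)) r)
    (Φ X Y : ℝ → ℝ)
    (hΦ : ∀ r, Φ r = r ^ N * (u' r * v' r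
        + u r ^ (μ + 1) * v r ^ s / (μ + 1)
        + u r ^ s * v r ^ (δ + 1) / (δ + 1)
        + N / (δ + 1) * v r * u' r / r
        + N / (μ + 1) * u r * v' r / r
        + s / (2 * (δ + 1)) * v r * u' r ^ 2 / u r
        + s / (2 * (μ + 1)) * u r * v' r ^ 2 / v r))
    (hX : ∀ r, X r = -(r * u' r) / u r)
    (hY : ∀ r, Y r = -(r * v' r) / v r) :
    ∀ r ∈ Set.Ioo R₁ R₂,
      HasDerivAt Φ
        (-(s / 2) * r ^ (N - 3) * u r * v r *
          (β * X r ^ 2 * (N - 2 - X r) + α * Y r ^ 2 * (N - 2 - Y r)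
            + X r * Y r * (β * X r + α * Y r + (2 / s) * (N - 2 - N * α - N * β)))) r := by
  intro r hr
  have hr0 : 0 < r := hR₁.trans hr.1
  have hE := hasDerivAt_energyDensity (N := N) hr0.ne' hs.ne' (by positivity) (by positivity)
    (hupos r hr).ne' (hvpos r hr).ne' (hu r hr) (hv r hr)
    ((mul_assoc (r ^ (N - 1)) _ _ ▸ hpde1 r hr).of_radial_equation hr0)
    ((mul_assoc (r ^ (N - 1)) _ _ ▸ hpde2 r hr).of_radial_equation hr0)
  rw [show Φ = fun ρ => ρ ^ N * energyDensity N s δ μ ρ (u ρ) (v ρ) (u' ρ) (v' ρ) from funext hΦ]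
  refine ((Real.hasDerivAt_rpow_const (Or.inl hr0.ne')).mul hE).congr_deriv ?_
  rw [hX, hY, hα, hβ, energyDissipation, Real.rpow_sub_one hr0.ne', Real.rpow_sub hr0,
    Real.rpow_ofNat]
  field_simp
  ring

/-- for the nonvariational system -Δu = u^s v^δ,
-Δv = u^μ v^s (N > 2, s > 0), the new energy Φ containing the terms in
X², Y² satisfies Φ'(r) = -(s/2) r^{N-3} u v B(X,Y), with
B(X,Y) = βX²(N-2-X) + αY²(N-2-Y) + XY[βX + αY + (2/s)(N-2-Nα-Nβ)],
α = 1/(μ+1), β = 1/(δ+1). -/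
theorem phi_energy_derivative
    (N s δ μ α β : ℝ) (R₁ R₂ : ℝ)
    (hN : 2 < N) (hs : 0 < s) (hδ : 0 < δ) (hμ : 0 < μ)
    (hD : 0 < δ * μ - (1 - s) ^ 2)
    (hα : α = 1 / (μ + 1)) (hβ : β = 1 / (δ + 1))
    (hR₁ : 0 < R₁) (hR : R₁ < R₂)
    (u v u' v' : ℝ → ℝ)
    (hu : ∀ r ∈ Set.Ioo R₁ R₂, HasDerivAt u (u' r) r)
    (hv : ∀ r ∈ Set.Ioo R₁ R₂, HasDerivAt v (v' r) r)
    (hupos : ∀ r ∈ Set.Ioo R₁ R₂, 0 < u r)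
    (hvpos : ∀ r ∈ Set.Ioo R₁ R₂, 0 < v r)
    (hu'neg : ∀ r ∈ Set.Ioo R₁ R₂, u' r < 0)
    (hv'neg : ∀ r ∈ Set.Ioo R₁ R₂, v' r < 0)
    (hpde1 : ∀ r ∈ Set.Ioo R₁ R₂,
      HasDerivAt (fun ρ => ρ ^ (N - 1) * u' ρ) (-(r ^ (N - 1) * u r ^ s * v r ^ δ)) r)
    (hpde2 : ∀ r ∈ Set.Ioo R₁ R₂,
      HasDerivAt (fun ρ => ρ ^ (N - 1) * v' ρ) (-(r ^ (N - 1) * u r ^ μ * v r ^ s)) r)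
    (Φ X Y : ℝ → ℝ)
    (hΦ : ∀ r, Φ r = r ^ N * (u' r * v' r
        + u r ^ (μ + 1) * v r ^ s / (μ + 1)
        + u r ^ s * v r ^ (δ + 1) / (δ + 1)
        + N / (δ + 1) * v r * u' r / r
        + N / (μ + 1) * u r * v' r / r
        + s / (2 * (δ + 1)) * v r * u' r ^ 2 / u r
        + s / (2 * (μ + 1)) * u r * v' r ^ 2 / v r))
    (hX : ∀ r, X r = -(r * u' r) / u r)
    (hY : ∀ r, Y r = -(r * v' r) / v r) :
    ∀ r ∈ Set.Ioo R₁ R₂,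
      HasDerivAt Φ
        (-(s / 2) * r ^ (N - 3) * u r * v r *
          (β * X r ^ 2 * (N - 2 - X r) + α * Y r ^ 2 * (N - 2 - Y r)
            + X r * Y r * (β * X r + α * Y r + (2 / s) * (N - 2 - N * α - N * β)))) r :=
  phi_energy_derivative_general N s δ μ α β R₁ R₂ hs hδ hμ hα hβ hR₁ u v u' v' hu hv hupos hvpos
    hpde1 hpde2 Φ X Y hΦ hX hY
end

section
/- Let N > 2, s > 0, α = 1/(μ+1), β = 1/(δ+1) with α, β > 0, and suppose N(α+β)/(N-2) - 1 ≤ (s/2)·min(α, β) and N(α+β) - (N-2) > 0. Then the cubic B(X,Y) = β X²(N-2-X) + α Y²(N-2-Y) + XY[βX + αY + (2/s)(N-2 - Nα - Nβ)] is nonnegative on the boundary of the square [0,N-2]² and strictly positive on its interior except at (0,0). -/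
/-!
Write `m = N - 2` and `C = (2/s)(N - 2 - Nα - Nβ)`; the hypothesis on `min α β` says exactly that
`C ≥ -m · min α β`. By the symmetry `(α, X) ↔ (β, Y)` we may assume `α ≤ β`, and then
`B = α F + (β - α) X²(m - X + Y) + XY (C + mα)`, where `F` is the symmetric cubic obtained for
`α = β = 1`, `C = -m`. The last two terms are nonnegative on the square, and for `X ≤ Y`,
`F = (m - Y)(X² - XY + Y²) + X²(2Y - X)`, which is nonnegative on the square and positive inside.
-/

/-- The cubic `B(X, Y)` with `m = N - 2`, `a = α`, `b = β` and `C = (2/s)(N - 2 - Nα - Nβ)`. -/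
def cubicB (m a b C X Y : ℝ) : ℝ :=
  b * X ^ 2 * (m - X) + a * Y ^ 2 * (m - Y) + X * Y * (b * X + a * Y + C)

namespace cubicB

variable {m a b C X Y : ℝ}

theorem swap : cubicB m a b C X Y = cubicB m b a C Y X := by
  unfold cubicB; ring

theorem one_one_eq :
    cubicB m 1 1 (-m) X Y = (m - Y) * (X ^ 2 - X * Y + Y ^ 2) + X ^ 2 * (2 * Y - X) := by
  unfold cubicB; ring

theorem eq_mul_one_one_add (a b : ℝ) :
    cubicB m a b C X Y =
      a * cubicB m 1 1 (-m) X Y + (b - a) * (X ^ 2 * (m - X + Y)) + X * Y * (C + m * a) := by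
  unfold cubicB; ring

theorem one_one_nonneg_of_le (hX : 0 ≤ X) (hXY : X ≤ Y) (hY : Y ≤ m) :
    0 ≤ cubicB m 1 1 (-m) X Y := by
  rw [one_one_eq]
  have hquad : 0 ≤ X ^ 2 - X * Y + Y ^ 2 := by nlinarith [sq_nonneg (X - Y)]
  have hlin : 0 ≤ 2 * Y - X := by linarith
  positivity

theorem one_one_pos_of_le (hX : 0 < X) (hXY : X ≤ Y) (hY : Y < m) :
    0 < cubicB m 1 1 (-m) X Y := by
  rw [one_one_eq]
  have hquad : 0 < X ^ 2 - X * Y + Y ^ 2 := by nlinarith [sq_nonneg (X - Y), mul_pos hX hX]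
  have hlin : 0 ≤ 2 * Y - X := by linarith
  have hmY : 0 < m - Y := by linarith
  positivity

theorem one_one_nonneg (hX : X ∈ Set.Icc 0 m) (hY : Y ∈ Set.Icc 0 m) :
    0 ≤ cubicB m 1 1 (-m) X Y := by
  rcases le_total X Y with hXY | hYX
  · exact one_one_nonneg_of_le hX.1 hXY hY.2
  · exact swap ▸ one_one_nonneg_of_le hY.1 hYX hX.2

theorem one_one_pos (hX : X ∈ Set.Ioo 0 m) (hY : Y ∈ Set.Ioo 0 m) :
    0 < cubicB m 1 1 (-m) X Y := by
  rcases le_total X Y with hXY | hYX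
  · exact one_one_pos_of_le hX.1 hXY hY.2
  · exact swap ▸ one_one_pos_of_le hY.1 hYX hX.2

theorem nonneg_of_le (ha : 0 ≤ a) (hab : a ≤ b) (hC : -(m * a) ≤ C)
    (hX : X ∈ Set.Icc 0 m) (hY : Y ∈ Set.Icc 0 m) : 0 ≤ cubicB m a b C X Y := by
  rw [eq_mul_one_one_add a b]
  have hF := one_one_nonneg hX hY
  have hba : 0 ≤ b - a := by linarith
  have hlin : 0 ≤ m - X + Y := by linarith [hX.2, hY.1]
  have hCa : 0 ≤ C + m * a := by linarith
  have hX0 := hX.1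
  have hY0 := hY.1
  positivity

theorem pos_of_le (ha : 0 < a) (hab : a ≤ b) (hC : -(m * a) ≤ C)
    (hX : X ∈ Set.Ioo 0 m) (hY : Y ∈ Set.Ioo 0 m) : 0 < cubicB m a b C X Y := by
  rw [eq_mul_one_one_add a b]
  have hF := one_one_pos hX hY
  have hba : 0 ≤ b - a := by linarith
  have hlin : 0 ≤ m - X + Y := by linarith [hX.2, hY.1]
  have hCa : 0 ≤ C + m * a := by linarith
  have hX0 := hX.1
  have hY0 := hY.1
  positivity

theorem nonneg (ha : 0 ≤ a) (hb : 0 ≤ b) (hC : -(m * min a b) ≤ C)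
    (hX : X ∈ Set.Icc 0 m) (hY : Y ∈ Set.Icc 0 m) : 0 ≤ cubicB m a b C X Y := by
  rcases le_total a b with hab | hba
  · exact nonneg_of_le ha hab (by rwa [min_eq_left hab] at hC) hX hY
  · exact swap ▸ nonneg_of_le hb hba (by rwa [min_eq_right hba] at hC) hY hX

theorem pos (ha : 0 < a) (hb : 0 < b) (hC : -(m * min a b) ≤ C)
    (hX : X ∈ Set.Ioo 0 m) (hY : Y ∈ Set.Ioo 0 m) : 0 < cubicB m a b C X Y := by
  rcases le_total a b with hab | hba
  · exact pos_of_le ha hab (by rwa [min_eq_left hab] at hC) hX hY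
  · exact swap ▸ pos_of_le hb hba (by rwa [min_eq_right hba] at hC) hY hX

end cubicB

theorem neg_mul_le_of_div_sub_one_le {N s α β c : ℝ} (hN : 2 < N) (hs : 0 < s)
    (h : N * (α + β) / (N - 2) - 1 ≤ s / 2 * c) :
    -((N - 2) * c) ≤ 2 / s * (N - 2 - N * α - N * β) := by
  have hm : 0 < N - 2 := by linarith
  have h' : N * (α + β) - (N - 2) ≤ s / 2 * c * (N - 2) := by
    rw [sub_le_iff_le_add, div_le_iff₀ hm] at h
    linarith
  calc -((N - 2) * c) = -(2 / s * (s / 2 * c * (N - 2))) := by field_simp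
    _ ≤ -(2 / s * (N * (α + β) - (N - 2))) := by gcongr
    _ = 2 / s * (N - 2 - N * α - N * β) := by ring

theorem cubic_positivity_general
    (N s δ μ α β : ℝ)
    (hN : 2 < N) (hs : 0 < s) (hδ : 0 < δ) (hμ : 0 < μ)
    (hα : α = 1 / (μ + 1)) (hβ : β = 1 / (δ + 1))
    (h1 : N * (α + β) / (N - 2) - 1 ≤ s / 2 * min α β) :
    (∀ X Y : ℝ, X ∈ Set.Icc 0 (N - 2) → Y ∈ Set.Icc 0 (N - 2) →
      (X = 0 ∨ X = N - 2 ∨ Y = 0 ∨ Y = N - 2) →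
      0 ≤ β * X ^ 2 * (N - 2 - X) + α * Y ^ 2 * (N - 2 - Y)
        + X * Y * (β * X + α * Y + 2 / s * (N - 2 - N * α - N * β))) ∧
    (∀ X Y : ℝ, X ∈ Set.Ioo 0 (N - 2) → Y ∈ Set.Ioo 0 (N - 2) →
      0 < β * X ^ 2 * (N - 2 - X) + α * Y ^ 2 * (N - 2 - Y)
        + X * Y * (β * X + α * Y + 2 / s * (N - 2 - N * α - N * β))) := by
  have hα0 : 0 < α := hα ▸ by positivity
  have hβ0 : 0 < β := hβ ▸ by positivity
  have hC := neg_mul_le_of_div_sub_one_le hN hs h1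
  exact ⟨fun X Y hX hY _ => cubicB.nonneg hα0.le hβ0.le hC hX hY,
    fun X Y hX hY => cubicB.pos hα0 hβ0 hC hX hY⟩

/-- positivity of the cubic B on the square [0,N-2]²:
nonnegative on the boundary and strictly positive in the interior, under
the condition N(α+β)/(N-2) - 1 ≤ (s/2)min(α,β) (with N(α+β) > N-2). -/
theorem cubic_positivity
    (N s δ μ α β : ℝ)
    (hN : 2 < N) (hs : 0 < s) (hδ : 0 < δ) (hμ : 0 < μ)
    (hα : α = 1 / (μ + 1)) (hβ : β = 1 / (δ + 1))
    (h1 : N * (α + β) / (N - 2) - 1 ≤ s / 2 * min α β)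
    (h2 : 0 < N * (α + β) - (N - 2)) :
    (∀ X Y : ℝ, X ∈ Set.Icc 0 (N - 2) → Y ∈ Set.Icc 0 (N - 2) →
      (X = 0 ∨ X = N - 2 ∨ Y = 0 ∨ Y = N - 2) →
      0 ≤ β * X ^ 2 * (N - 2 - X) + α * Y ^ 2 * (N - 2 - Y)
        + X * Y * (β * X + α * Y + 2 / s * (N - 2 - N * α - N * β))) ∧
    (∀ X Y : ℝ, X ∈ Set.Ioo 0 (N - 2) → Y ∈ Set.Ioo 0 (N - 2) →
      0 < β * X ^ 2 * (N - 2 - X) + α * Y ^ 2 * (N - 2 - Y)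
        + X * Y * (β * X + α * Y + 2 / s * (N - 2 - N * α - N * β))) :=
  cubic_positivity_general N s δ μ α β hN hs hδ hμ hα hβ h1
end

section
/- For the potential system -Δ_p u = r^a u^s v^{m+1}, -Δ_q v = r^a u^{s+1} v^m, the energy E_P(r) = r^N[(s+1)(|u'|^p/p' + ((N-p)/p) u|u'|^{p-2}u'/r) + (m+1)(|v'|^q/q' + ((N-q)/q) v|v'|^{q-2}v'/r) + r^a u^{s+1} v^{m+1}] satisfies E_P'(r) = (N + a - (s+1)(N-p)/p - (m+1)(N-q)/q) · r^{N-1+a} u^{s+1} v^{m+1} along positive radial solutions. In particular E_P is constant on the critical line N + a = (m+1)(N-q)/q + (s+1)(N-p)/p. -/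
/-!
Writing `w = r^(N-1) |u'|^(p-2) u'` for the flux, the kinetic part is
`r^N |u'|^p / p' = r^(N-(N-1)p') |w|^p' / p'` and the cross part is `((N-p)/p) u w`, so both
can be differentiated through `w` although `u'` itself need not be differentiable. The terms in
`r^(N-1) |u'|^p` cancel, leaving `(r u' + ((N-p)/p) u) w'`; inserting the equations for `w'`, the
terms in `r^(N+a) u' u^s v^(m+1)` and `r^(N+a) v' u^(s+1) v^m` cancel against the derivative of the
potential `r^(N+a) u^(s+1) v^(m+1)`.
-/

open Real Filter Topology

section PLaplacianFlux

variable {N p r : ℝ}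

lemma abs_rpow_sub_two_mul_self_mul_self (hp : p ≠ 0) (y : ℝ) :
    |y| ^ (p - 2) * y * y = |y| ^ p := by
  rcases eq_or_ne y 0 with rfl | hy
  · simp [zero_rpow hp]
  · have hy' : |y| ≠ 0 := abs_ne_zero.mpr hy
    rw [mul_assoc, ← abs_mul_abs_self, ← mul_assoc, ← rpow_add_one hy', ← rpow_add_one hy']
    ring_nf

lemma abs_flux (hp : p ≠ 1) (hr : 0 < r) (y : ℝ) :
    |r ^ (N - 1) * |y| ^ (p - 2) * y| = r ^ (N - 1) * |y| ^ (p - 1) := by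
  rw [abs_mul, abs_mul, abs_of_pos (rpow_pos_of_pos hr _),
    abs_of_nonneg (rpow_nonneg (abs_nonneg y) _), mul_assoc]
  rcases eq_or_ne y 0 with rfl | hy
  · simp [zero_rpow (sub_ne_zero.mpr hp)]
  · rw [← rpow_add_one (abs_pos.mpr hy).ne']
    ring_nf

lemma abs_flux_rpow_conj (hp : 1 < p) (hr : 0 < r) (y : ℝ) :
    |r ^ (N - 1) * |y| ^ (p - 2) * y| ^ (p / (p - 1))
      = r ^ ((N - 1) * (p / (p - 1))) * |y| ^ p := by
  have hp1 : p - 1 ≠ 0 := by linarith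
  rw [abs_flux hp.ne' hr, mul_rpow (rpow_nonneg hr.le _) (rpow_nonneg (abs_nonneg y) _),
    ← rpow_mul hr.le, ← rpow_mul (abs_nonneg y), mul_div_cancel₀ p hp1]

lemma abs_flux_rpow_conj_sub_two_mul (hp : 1 < p) (hr : 0 < r) (y : ℝ) :
    |r ^ (N - 1) * |y| ^ (p - 2) * y| ^ (p / (p - 1) - 2) * (r ^ (N - 1) * |y| ^ (p - 2) * y)
      = r ^ ((N - 1) * (p / (p - 1) - 1)) * y := by
  rcases eq_or_ne y 0 with rfl | hy
  · simp
  have hp1 : p - 1 ≠ 0 := by linarith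
  have hy' : 0 < |y| := abs_pos.mpr hy
  rw [abs_flux hp.ne' hr, mul_rpow (rpow_nonneg hr.le _) (rpow_nonneg hy'.le _),
    ← rpow_mul hr.le, ← rpow_mul hy'.le]
  have hr_exp : r ^ ((N - 1) * (p / (p - 1) - 2)) * r ^ (N - 1)
      = r ^ ((N - 1) * (p / (p - 1) - 1)) := by
    rw [← rpow_add hr]; ring_nf
  have hy_exp : |y| ^ ((p - 1) * (p / (p - 1) - 2)) * |y| ^ (p - 2) = 1 := by
    rw [← rpow_add hy', show (p - 1) * (p / (p - 1) - 2) + (p - 2) = 0 by field_simp; ring,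
      rpow_zero]
  linear_combination (|y| ^ ((p - 1) * (p / (p - 1) - 2)) * |y| ^ (p - 2) * y) * hr_exp
    + (r ^ ((N - 1) * (p / (p - 1) - 1)) * y) * hy_exp

end PLaplacianFlux

section RadialEnergy

variable {N p r dw : ℝ} {u u' : ℝ → ℝ}

lemma hasDerivAt_rpow_mul_abs_rpow_div_conj (hp : 1 < p) (hr : 0 < r)
    (hw : HasDerivAt (fun ρ => ρ ^ (N - 1) * |u' ρ| ^ (p - 2) * u' ρ) dw r) :
    HasDerivAt (fun ρ => ρ ^ N * (|u' ρ| ^ p / (p / (p - 1))))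
      ((p - N) / p * (r ^ (N - 1) * |u' r| ^ p) + r * u' r * dw) r := by
  have hp1 : p - 1 ≠ 0 := by linarith
  have hp' : 1 < p / (p - 1) := (one_lt_div (by linarith)).mpr (by linarith)
  have hflux : (fun ρ => ρ ^ N * (|u' ρ| ^ p / (p / (p - 1)))) =ᶠ[𝓝 r]
      fun ρ => (p - 1) / p * (ρ ^ (N - (N - 1) * (p / (p - 1)))
        * |ρ ^ (N - 1) * |u' ρ| ^ (p - 2) * u' ρ| ^ (p / (p - 1))) := by
    filter_upwards [Ioi_mem_nhds hr] with ρ hρ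
    rw [abs_flux_rpow_conj hp hρ, ← mul_assoc (ρ ^ _), ← rpow_add hρ, sub_add_cancel]
    field_simp
  have habs : HasDerivAt (fun ρ => |ρ ^ (N - 1) * |u' ρ| ^ (p - 2) * u' ρ| ^ (p / (p - 1)))
      (p / (p - 1) * |r ^ (N - 1) * |u' r| ^ (p - 2) * u' r| ^ (p / (p - 1) - 2)
        * (r ^ (N - 1) * |u' r| ^ (p - 2) * u' r) * dw) r :=
    (hasDerivAt_abs_rpow _ hp').comp r hw
  have hd := ((hasDerivAt_rpow_const (p := N - (N - 1) * (p / (p - 1))) (Or.inl hr.ne')).mul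
    habs).const_mul ((p - 1) / p)
  refine (hd.congr_of_eventuallyEq hflux).congr_deriv ?_
  rw [mul_assoc (p / (p - 1)), abs_flux_rpow_conj_sub_two_mul hp hr, abs_flux_rpow_conj hp hr]
  have hr_exp₁ : r ^ (N - (N - 1) * (p / (p - 1)) - 1) * r ^ ((N - 1) * (p / (p - 1)))
      = r ^ (N - 1) := by
    rw [← rpow_add hr]; ring_nf
  have hr_exp₂ : r ^ (N - (N - 1) * (p / (p - 1))) * r ^ ((N - 1) * (p / (p - 1) - 1)) = r := by
    rw [← rpow_add hr]; ring_nf; exact rpow_one r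
  have hcoef₁ : (p - 1) / p * (N - (N - 1) * (p / (p - 1))) = (p - N) / p := by
    field_simp; ring
  have hcoef₂ : (p - 1) / p * (p / (p - 1)) = 1 := by field_simp
  linear_combination ((p - N) / p * |u' r| ^ p) * hr_exp₁ + (u' r * dw) * hr_exp₂
    + (r ^ (N - (N - 1) * (p / (p - 1)) - 1) * r ^ ((N - 1) * (p / (p - 1))) * |u' r| ^ p) * hcoef₁
    + (r ^ (N - (N - 1) * (p / (p - 1))) * r ^ ((N - 1) * (p / (p - 1) - 1)) * u' r * dw) * hcoef₂

lemma hasDerivAt_radial_energy_term (hp : 1 < p) (hr : 0 < r) (hu : HasDerivAt u (u' r) r)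
    (hw : HasDerivAt (fun ρ => ρ ^ (N - 1) * |u' ρ| ^ (p - 2) * u' ρ) dw r) :
    HasDerivAt (fun ρ => ρ ^ N * (|u' ρ| ^ p / (p / (p - 1))
        + (N - p) / p * u ρ * |u' ρ| ^ (p - 2) * u' ρ / ρ))
      ((r * u' r + (N - p) / p * u r) * dw) r := by
  have hcross : (fun ρ => ρ ^ N * ((N - p) / p * u ρ * |u' ρ| ^ (p - 2) * u' ρ / ρ)) =ᶠ[𝓝 r]
      fun ρ => (N - p) / p * (u ρ * (ρ ^ (N - 1) * |u' ρ| ^ (p - 2) * u' ρ)) := by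
    filter_upwards [Ioi_mem_nhds hr] with ρ hρ
    rw [rpow_sub hρ, rpow_one]
    field_simp
  have hsplit : (fun ρ => ρ ^ N * (|u' ρ| ^ p / (p / (p - 1))
        + (N - p) / p * u ρ * |u' ρ| ^ (p - 2) * u' ρ / ρ))
      = fun ρ => ρ ^ N * (|u' ρ| ^ p / (p / (p - 1)))
        + ρ ^ N * ((N - p) / p * u ρ * |u' ρ| ^ (p - 2) * u' ρ / ρ) := by
    ext ρ
    ring
  rw [hsplit]
  refine ((hasDerivAt_rpow_mul_abs_rpow_div_conj hp hr hw).add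
    (((hu.mul hw).const_mul ((N - p) / p)).congr_of_eventuallyEq hcross)).congr_deriv ?_
  rw [← abs_rpow_sub_two_mul_self_mul_self (by linarith : p ≠ 0)]
  ring

end RadialEnergy

lemma hasDerivAt_rpow_mul_rpow_add_one_mul_rpow_add_one {b s m r du dv : ℝ} {u v : ℝ → ℝ}
    (hr : r ≠ 0) (hu : HasDerivAt u du r) (hv : HasDerivAt v dv r) (hu0 : u r ≠ 0)
    (hv0 : v r ≠ 0) :
    HasDerivAt (fun ρ => ρ ^ b * u ρ ^ (s + 1) * v ρ ^ (m + 1))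
      (r ^ (b - 1) * u r ^ s * v r ^ m
        * (b * u r * v r + r * ((s + 1) * du * v r + (m + 1) * u r * dv))) r := by
  refine (((hasDerivAt_rpow_const (Or.inl hr)).mul (hu.rpow_const (Or.inl hu0))).mul
    (hv.rpow_const (Or.inl hv0))).congr_deriv ?_
  simp only [Pi.mul_apply]
  rw [add_sub_cancel_right, add_sub_cancel_right, rpow_add_one hu0, rpow_add_one hv0,
    ← sub_add_cancel b 1, rpow_add_one hr, add_sub_cancel_right]
  ring

theorem potential_energy_derivative_general
    (N p q a s m : ℝ) (R₁ R₂ : ℝ)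
    (hp : 1 < p) (hq : 1 < q)
    (hR₁ : 0 < R₁)
    (u v u' v' : ℝ → ℝ)
    (hu : ∀ r ∈ Set.Ioo R₁ R₂, HasDerivAt u (u' r) r)
    (hv : ∀ r ∈ Set.Ioo R₁ R₂, HasDerivAt v (v' r) r)
    (hupos : ∀ r ∈ Set.Ioo R₁ R₂, 0 < u r)
    (hvpos : ∀ r ∈ Set.Ioo R₁ R₂, 0 < v r)
    (hpde1 : ∀ r ∈ Set.Ioo R₁ R₂,
      HasDerivAt (fun ρ => ρ ^ (N - 1) * |u' ρ| ^ (p - 2) * u' ρ)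
        (-(r ^ (N - 1 + a) * u r ^ s * v r ^ (m + 1))) r)
    (hpde2 : ∀ r ∈ Set.Ioo R₁ R₂,
      HasDerivAt (fun ρ => ρ ^ (N - 1) * |v' ρ| ^ (q - 2) * v' ρ)
        (-(r ^ (N - 1 + a) * u r ^ (s + 1) * v r ^ m)) r)
    (E : ℝ → ℝ)
    (hE : ∀ r, E r = r ^ N * ((s + 1) * (|u' r| ^ p / (p / (p - 1))
        + (N - p) / p * u r * |u' r| ^ (p - 2) * u' r / r)
        + (m + 1) * (|v' r| ^ q / (q / (q - 1))
        + (N - q) / q * v r * |v' r| ^ (q - 2) * v' r / r)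
        + r ^ a * u r ^ (s + 1) * v r ^ (m + 1))) :
    (∀ r ∈ Set.Ioo R₁ R₂,
      HasDerivAt E
        ((N + a - (s + 1) * (N - p) / p - (m + 1) * (N - q) / q)
          * r ^ (N - 1 + a) * u r ^ (s + 1) * v r ^ (m + 1)) r) ∧
    (N + a = (m + 1) * (N - q) / q + (s + 1) * (N - p) / p →
      ∀ r₁ ∈ Set.Ioo R₁ R₂, ∀ r₂ ∈ Set.Ioo R₁ R₂, E r₁ = E r₂) := by
  have hderiv : ∀ r ∈ Set.Ioo R₁ R₂, HasDerivAt E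
      ((N + a - (s + 1) * (N - p) / p - (m + 1) * (N - q) / q)
        * r ^ (N - 1 + a) * u r ^ (s + 1) * v r ^ (m + 1)) r := by
    intro r hr
    have hr₀ : 0 < r := hR₁.trans hr.1
    have hsplit : E =ᶠ[𝓝 r] fun ρ =>
        (s + 1) * (ρ ^ N * (|u' ρ| ^ p / (p / (p - 1))
          + (N - p) / p * u ρ * |u' ρ| ^ (p - 2) * u' ρ / ρ))
        + (m + 1) * (ρ ^ N * (|v' ρ| ^ q / (q / (q - 1))
          + (N - q) / q * v ρ * |v' ρ| ^ (q - 2) * v' ρ / ρ))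
        + ρ ^ (N + a) * u ρ ^ (s + 1) * v ρ ^ (m + 1) := by
      filter_upwards [Ioi_mem_nhds hr₀] with ρ hρ
      rw [hE, rpow_add hρ]
      ring
    refine (((((hasDerivAt_radial_energy_term hp hr₀ (hu r hr) (hpde1 r hr)).const_mul (s + 1)).add
      ((hasDerivAt_radial_energy_term hq hr₀ (hv r hr) (hpde2 r hr)).const_mul (m + 1))).add
      (hasDerivAt_rpow_mul_rpow_add_one_mul_rpow_add_one hr₀.ne' (hu r hr) (hv r hr)
        (hupos r hr).ne' (hvpos r hr).ne')).congr_of_eventuallyEq hsplit).congr_deriv ?_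
    rw [show N + a - 1 = N - 1 + a by ring, rpow_add_one (hupos r hr).ne',
      rpow_add_one (hvpos r hr).ne']
    field_simp
    ring
  refine ⟨hderiv, fun hcrit r₁ hr₁ r₂ hr₂ => ?_⟩
  have hcoef : N + a - (s + 1) * (N - p) / p - (m + 1) * (N - q) / q = 0 := by linarith
  exact isOpen_Ioo.is_const_of_deriv_eq_zero isPreconnected_Ioo
    (fun r hr => (hderiv r hr).differentiableAt.differentiableWithinAt)
    (fun r hr => by simp [(hderiv r hr).deriv, hcoef]) hr₁ hr₂

/-- for the potential system -Δ_p u = r^a u^s v^{m+1},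
-Δ_q v = r^a u^{s+1} v^m, the energy E_P satisfies
E_P'(r) = (N + a - (s+1)(N-p)/p - (m+1)(N-q)/q) r^{N-1+a} u^{s+1} v^{m+1};
in particular E_P is constant on the critical line
N + a = (m+1)(N-q)/q + (s+1)(N-p)/p. -/
theorem potential_energy_derivative
    (N p q a s m : ℝ) (R₁ R₂ : ℝ)
    (hp : 1 < p) (hpN : p < N) (hq : 1 < q) (hqN : q < N)
    (hpa : 0 < p + a) (hs : 0 ≤ s) (hm : 0 ≤ m)
    (hD : 0 < p * (1 + m) + q * (1 + s) - p * q)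
    (hR₁ : 0 < R₁) (hR : R₁ < R₂)
    (u v u' v' : ℝ → ℝ)
    (hu : ∀ r ∈ Set.Ioo R₁ R₂, HasDerivAt u (u' r) r)
    (hv : ∀ r ∈ Set.Ioo R₁ R₂, HasDerivAt v (v' r) r)
    (hupos : ∀ r ∈ Set.Ioo R₁ R₂, 0 < u r)
    (hvpos : ∀ r ∈ Set.Ioo R₁ R₂, 0 < v r)
    (hpde1 : ∀ r ∈ Set.Ioo R₁ R₂,
      HasDerivAt (fun ρ => ρ ^ (N - 1) * |u' ρ| ^ (p - 2) * u' ρ)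
        (-(r ^ (N - 1 + a) * u r ^ s * v r ^ (m + 1))) r)
    (hpde2 : ∀ r ∈ Set.Ioo R₁ R₂,
      HasDerivAt (fun ρ => ρ ^ (N - 1) * |v' ρ| ^ (q - 2) * v' ρ)
        (-(r ^ (N - 1 + a) * u r ^ (s + 1) * v r ^ m)) r)
    (E : ℝ → ℝ)
    (hE : ∀ r, E r = r ^ N * ((s + 1) * (|u' r| ^ p / (p / (p - 1))
        + (N - p) / p * u r * |u' r| ^ (p - 2) * u' r / r)
        + (m + 1) * (|v' r| ^ q / (q / (q - 1))
        + (N - q) / q * v r * |v' r| ^ (q - 2) * v' r / r)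
        + r ^ a * u r ^ (s + 1) * v r ^ (m + 1))) :
    (∀ r ∈ Set.Ioo R₁ R₂,
      HasDerivAt E
        ((N + a - (s + 1) * (N - p) / p - (m + 1) * (N - q) / q)
          * r ^ (N - 1 + a) * u r ^ (s + 1) * v r ^ (m + 1)) r) ∧
    (N + a = (m + 1) * (N - q) / q + (s + 1) * (N - p) / p →
      ∀ r₁ ∈ Set.Ioo R₁ R₂, ∀ r₂ ∈ Set.Ioo R₁ R₂, E r₁ = E r₂) :=
  potential_energy_derivative_general N p q a s m R₁ R₂ hp hq hR₁ u v u' v' hu hv hupos hvpos hpde1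
    hpde2 E hE
end
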